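/- arXiv:2104.07698 — 6 statements merged into one kernel-verified Lean document; each statement's English description precedes it below -/
import Mathlib

section
/- Let Υ'(t, L) := e^L · L^{𝒞·√2} · ∫_{w ∈ [0, B(L)] \ J_{L,t}} ρ_L(B(L)−w) · (B(L)−w)^{−α_d} · (1+w) · e^{−√2·w} dw. Then limsup_{L→∞} limsup_{t→∞} L^{(6√2+1)/6} · Υ'(t, L) < ∞; that is, Υ'(t, L) is bounded above by a constant multiple of L^{−(6√2+1)/6}, in the iterated limit t → ∞ followed by L → ∞. -/
open MeasureTheory Filter Set

noncomputable section
set_option maxHeartbeats 1000000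

/-- `α_d = (d-1)/2`. -/
def alphaD (d : ℕ) : ℝ := ((d : ℝ) - 1) / 2

/-- `𝔠_d = (d-4)/(2√2)`. -/
def cD (d : ℕ) : ℝ := ((d : ℝ) - 4) / (2 * Real.sqrt 2)

/-- `m_t = √2·t + 𝔠_d·log t`. -/
def mT (d : ℕ) (t : ℝ) : ℝ := Real.sqrt 2 * t + cD d * Real.log t

/-- `𝔬_t = 𝔠_d·(log t)/t`. -/
def oT (d : ℕ) (t : ℝ) : ℝ := cD d * Real.log t / t

/-- The barrier value `B(L) = (m_t/t)·L + (𝒞+1)·log L`. -/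
def BL (d : ℕ) (C t L : ℝ) : ℝ := mT d t / t * L + (C + 1) * Real.log L

/-- The window `J_{L,t} = [𝔬_t·L + L^{1/6} + (𝒞+1)·log L, 𝔬_t·L + L^{2/3} + (𝒞+1)·log L]`. -/
def Jwin (d : ℕ) (C t L : ℝ) : Set ℝ :=
  Icc (oT d t * L + L ^ ((1 : ℝ) / 6) + (C + 1) * Real.log L)
      (oT d t * L + L ^ ((2 : ℝ) / 3) + (C + 1) * Real.log L)

/-- The probability density of the Euclidean norm at time `L` of a standard
`d`-dimensional Brownian motion started at the origin, i.e. of `√L` times a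
chi-distributed random variable with `d` degrees of freedom:
`ρ_L(r) = r^{d-1}·e^{-r²/(2L)} / (2^{d/2-1}·Γ(d/2)·L^{d/2})`. -/
def rhoL (d : ℕ) (L r : ℝ) : ℝ :=
  r ^ ((d : ℝ) - 1) * Real.exp (-r ^ 2 / (2 * L)) /
    ((2 : ℝ) ^ ((d : ℝ) / 2 - 1) * Real.Gamma ((d : ℝ) / 2) * L ^ ((d : ℝ) / 2))

/-- `Υ'(t,L) = e^L·L^{𝒞√2}·∫_{[0,B(L)] \ J_{L,t}} ρ_L(B(L)-w)·(B(L)-w)^{-α_d}·(1+w)·e^{-√2 w} dw`. -/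
def UpsilonOut (d : ℕ) (C t L : ℝ) : ℝ :=
  Real.exp L * L ^ (C * Real.sqrt 2) *
    ∫ w in Icc (0 : ℝ) (BL d C t L) \ Jwin d C t L,
      rhoL d L (BL d C t L - w) * (BL d C t L - w) ^ (-alphaD d) *
        (1 + w) * Real.exp (-Real.sqrt 2 * w)

/-! ### Auxiliary lemmas -/

lemma aux_rpow_combine (d : ℕ) {r : ℝ} (hr : 0 ≤ r) :
    r ^ ((d:ℝ) - 1) * r ^ (-alphaD d) = r ^ alphaD d := by
  rcases eq_or_lt_of_le hr with h0 | h0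
  · rw [← h0]
    by_cases hd : d = 1
    · subst hd; norm_num [alphaD]
    · have h1 : ((d:ℝ) - 1) ≠ 0 := by
        simp only [sub_ne_zero]; exact_mod_cast hd
      have h2 : alphaD d ≠ 0 := by
        unfold alphaD; intro h; apply h1; linarith [div_eq_zero_iff.mp h]
      rw [Real.zero_rpow h1, Real.zero_rpow h2, zero_mul]
  · rw [← Real.rpow_add h0]
    congr 1
    unfold alphaD; ring

/-- The constant in the final bound. -/
def auxKc (d : ℕ) (C : ℝ) : ℝ :=
  (2:ℝ) ^ (alphaD d) * (4 * Real.exp (Real.sqrt 2 + 1) + 6 * Real.exp (Real.sqrt 2)) /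
    ((2:ℝ) ^ ((d:ℝ)/2 - 1) * Real.Gamma ((d:ℝ)/2))

lemma auxKc_pos (d : ℕ) (hd : 1 ≤ d) (C : ℝ) : 0 < auxKc d C := by
  have hdpos : (0:ℝ) < (d:ℝ)/2 := by
    have : (1:ℝ) ≤ (d:ℝ) := by exact_mod_cast hd
    linarith
  have hG := Real.Gamma_pos_of_pos hdpos
  unfold auxKc
  have h1 : (0:ℝ) < (2:ℝ) ^ (alphaD d) := Real.rpow_pos_of_pos (by norm_num) _
  have h2 : (0:ℝ) < (2:ℝ) ^ ((d:ℝ)/2 - 1) := Real.rpow_pos_of_pos (by norm_num) _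
  have h3 : (0:ℝ) < 4 * Real.exp (Real.sqrt 2 + 1) + 6 * Real.exp (Real.sqrt 2) := by
    positivity
  positivity

/-- Pointwise bound on the left region. -/
lemma aux_point1 (d : ℕ) (C L a δ j1 : ℝ) (hL0 : (0:ℝ) < L)
    (hα : 0 ≤ alphaD d)
    (hs2 : Real.sqrt 2 ^ 2 = 2) (hs2nn : 0 ≤ Real.sqrt 2)
    (ha : a = Real.sqrt 2 * L + δ)
    (hδabs : |δ| ≤ L ^ ((1:ℝ)/6) - 1)
    (ε : ℝ) (hδdef : ε * L + (C+1) * Real.log L = δ)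
    (hεL : |ε * L| ≤ 1)
    (hB : 2 * L ^ ((1:ℝ)/3) ≤ L)
    (hj1a : j1 ≤ a) (hj1ub : j1 ≤ 2 * L ^ ((1:ℝ)/6) - 1)
    (ha2L : a ≤ 2*L)
    (w : ℝ) (hw : w ∈ Icc (0:ℝ) j1) :
    ((a-w) ^ (alphaD d) * Real.exp (-(a-w)^2/(2*L)) * (1+w) * Real.exp (-Real.sqrt 2 * w))
      ≤ (2*L) ^ (alphaD d) * (2 * L ^ ((1:ℝ)/6)) *
          Real.exp (-L + (Real.sqrt 2 + 1) + -(Real.sqrt 2*(C+1)*Real.log L)) := by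
  obtain ⟨hw0, hw1⟩ := hw
  have hwa : w ≤ a := le_trans hw1 hj1a
  have hpow6 : 0 ≤ L ^ ((1:ℝ)/6) := (Real.rpow_pos_of_pos hL0 _).le
  have hid : (-L - Real.sqrt 2*δ + δ*w/L) - (-(a-w)^2/(2*L) - Real.sqrt 2*w)
      = (δ^2 + w^2)/(2*L) := by
    rw [ha]
    have hL' := hL0.ne'
    field_simp
    linear_combination L^2 * hs2
  have hnn : 0 ≤ (δ^2 + w^2)/(2*L) := by positivity
  have h1 : -(a-w)^2/(2*L) - Real.sqrt 2*w ≤ -L - Real.sqrt 2*δ + δ*w/L := by linarith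
  have hpowmul : L ^ ((1:ℝ)/6) * (2 * L ^ ((1:ℝ)/6)) = 2 * L ^ ((1:ℝ)/3) := by
    rw [show L ^ ((1:ℝ)/6) * (2 * L ^ ((1:ℝ)/6)) = 2 * (L ^ ((1:ℝ)/6) * L ^ ((1:ℝ)/6)) from by
      ring, ← Real.rpow_add hL0]
    norm_num
  have h2 : δ*w/L ≤ 1 := by
    rw [div_le_one hL0]
    calc δ*w ≤ |δ| * w := mul_le_mul_of_nonneg_right (le_abs_self _) hw0
    _ ≤ L ^ ((1:ℝ)/6) * (2 * L ^ ((1:ℝ)/6)) := by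
        apply mul_le_mul (by linarith) (by linarith) hw0 hpow6
    _ = 2 * L ^ ((1:ℝ)/3) := hpowmul
    _ ≤ L := hB
  have h3 : -(Real.sqrt 2 * δ) ≤ Real.sqrt 2 - Real.sqrt 2*(C+1)*Real.log L := by
    have hneg : -(ε*L) ≤ 1 := by
      have := neg_abs_le (ε*L); linarith
    have e1 : Real.sqrt 2 * (-(ε*L)) ≤ Real.sqrt 2 * 1 := mul_le_mul_of_nonneg_left hneg hs2nn
    have : -(Real.sqrt 2 * δ) = Real.sqrt 2 * (-(ε*L)) - Real.sqrt 2*(C+1)*Real.log L := by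
      rw [← hδdef]; ring
    linarith
  have hXle : -(a-w)^2/(2*L) + -(Real.sqrt 2*w)
      ≤ -L + (Real.sqrt 2 + 1) + -(Real.sqrt 2*(C+1)*Real.log L) := by linarith
  calc (a-w) ^ (alphaD d) * Real.exp (-(a-w)^2/(2*L)) * (1+w) * Real.exp (-Real.sqrt 2 * w)
      = (a-w) ^ (alphaD d) * (1+w) *
        Real.exp (-(a-w)^2/(2*L) + -(Real.sqrt 2*w)) := by
        rw [Real.exp_add]; ring
    _ ≤ (2*L) ^ (alphaD d) * (2 * L ^ ((1:ℝ)/6)) *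
        Real.exp (-L + (Real.sqrt 2 + 1) + -(Real.sqrt 2*(C+1)*Real.log L)) := by
        apply mul_le_mul
        · apply mul_le_mul
          · exact Real.rpow_le_rpow (by linarith) (by linarith) hα
          · linarith
          · linarith
          · exact Real.rpow_nonneg (by linarith) _
        · exact Real.exp_le_exp.mpr hXle
        · exact (Real.exp_pos _).le
        · exact mul_nonneg (Real.rpow_nonneg (by linarith) _) (by linarith)

/-- Pointwise bound on the right region. -/
lemma aux_point2 (d : ℕ) (C L a δ j2 : ℝ) (hL0 : (0:ℝ) < L)
    (hα : 0 ≤ alphaD d)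
    (hs2 : Real.sqrt 2 ^ 2 = 2) (hs2nn : 0 ≤ Real.sqrt 2)
    (ha : a = Real.sqrt 2 * L + δ)
    (hδabs : |δ| ≤ L ^ ((1:ℝ)/6) - 1)
    (ε : ℝ) (hδdef : ε * L + (C+1) * Real.log L = δ)
    (hεL : |ε * L| ≤ 1)
    (hj2lb : L ^ ((2:ℝ)/3) / 2 ≤ j2) (hj2nn : 0 ≤ j2)
    (ha2L : a ≤ 2*L) (hL1 : 1 ≤ L)
    (w : ℝ) (hw : w ∈ Icc j2 a) :
    ((a-w) ^ (alphaD d) * Real.exp (-(a-w)^2/(2*L)) * (1+w) * Real.exp (-Real.sqrt 2 * w))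
      ≤ (2*L) ^ (alphaD d) * (3 * L) *
          Real.exp (-L + Real.sqrt 2 + -(Real.sqrt 2*(C+1)*Real.log L)
            + (2 * L ^ ((1:ℝ)/6) - L ^ ((1:ℝ)/3)/8)) := by
  obtain ⟨hw0', hwa⟩ := hw
  have hw0 : 0 ≤ w := le_trans hj2nn hw0'
  have hpow6 : 0 ≤ L ^ ((1:ℝ)/6) := (Real.rpow_pos_of_pos hL0 _).le
  have hid : (-L - Real.sqrt 2*δ + δ*w/L) - (-(a-w)^2/(2*L) - Real.sqrt 2*w)
      = (δ^2 + w^2)/(2*L) := by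
    rw [ha]
    have hL' := hL0.ne'
    field_simp
    linear_combination L^2 * hs2
  have hδsq : 0 ≤ δ^2/(2*L) := by positivity
  have h1 : -(a-w)^2/(2*L) - Real.sqrt 2*w ≤ -L - Real.sqrt 2*δ + δ*w/L - w^2/(2*L) := by
    have : (δ^2 + w^2)/(2*L) = δ^2/(2*L) + w^2/(2*L) := by ring
    linarith [hid, hδsq, this]
  have h2 : δ*w/L ≤ 2 * L ^ ((1:ℝ)/6) := by
    rw [div_le_iff₀ hL0]
    calc δ*w ≤ |δ| * w := mul_le_mul_of_nonneg_right (le_abs_self _) hw0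
    _ ≤ L ^ ((1:ℝ)/6) * (2*L) := by
        apply mul_le_mul (by linarith) (by linarith) hw0 hpow6
    _ = 2 * L ^ ((1:ℝ)/6) * L := by ring
  have hp43 : L ^ ((2:ℝ)/3) * L ^ ((2:ℝ)/3) = L ^ ((1:ℝ)/3) * L := by
    have e1 : L ^ ((2:ℝ)/3) * L ^ ((2:ℝ)/3) = L ^ ((4:ℝ)/3) := by
      rw [← Real.rpow_add hL0]; norm_num
    have e2 : L ^ ((1:ℝ)/3) * L ^ ((1:ℝ)) = L ^ ((4:ℝ)/3) := by
      rw [← Real.rpow_add hL0]; norm_num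
    rw [e1, ← e2, Real.rpow_one]
  have h4 : L ^ ((1:ℝ)/3)/8 ≤ w^2/(2*L) := by
    rw [div_le_div_iff₀ (by norm_num) (by linarith)]
    have hsq : (L ^ ((2:ℝ)/3)/2)^2 ≤ w^2 :=
      pow_le_pow_left₀ (by positivity) (le_trans hj2lb hw0') 2
    nlinarith [hsq, hp43]
  have h3 : -(Real.sqrt 2 * δ) ≤ Real.sqrt 2 - Real.sqrt 2*(C+1)*Real.log L := by
    have hneg : -(ε*L) ≤ 1 := by
      have := neg_abs_le (ε*L); linarith
    have e1 : Real.sqrt 2 * (-(ε*L)) ≤ Real.sqrt 2 * 1 := mul_le_mul_of_nonneg_left hneg hs2nn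
    have : -(Real.sqrt 2 * δ) = Real.sqrt 2 * (-(ε*L)) - Real.sqrt 2*(C+1)*Real.log L := by
      rw [← hδdef]; ring
    linarith
  have hXle : -(a-w)^2/(2*L) + -(Real.sqrt 2*w)
      ≤ -L + Real.sqrt 2 + -(Real.sqrt 2*(C+1)*Real.log L)
          + (2 * L ^ ((1:ℝ)/6) - L ^ ((1:ℝ)/3)/8) := by linarith
  calc (a-w) ^ (alphaD d) * Real.exp (-(a-w)^2/(2*L)) * (1+w) * Real.exp (-Real.sqrt 2 * w)
      = (a-w) ^ (alphaD d) * (1+w) *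
        Real.exp (-(a-w)^2/(2*L) + -(Real.sqrt 2*w)) := by
        rw [Real.exp_add]; ring
    _ ≤ (2*L) ^ (alphaD d) * (3 * L) *
        Real.exp (-L + Real.sqrt 2 + -(Real.sqrt 2*(C+1)*Real.log L)
          + (2 * L ^ ((1:ℝ)/6) - L ^ ((1:ℝ)/3)/8)) := by
        apply mul_le_mul
        · apply mul_le_mul
          · exact Real.rpow_le_rpow (by linarith) (by linarith) hα
          · linarith
          · linarith
          · exact Real.rpow_nonneg (by linarith) _
        · exact Real.exp_le_exp.mpr hXle
        · exact (Real.exp_pos _).le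
        · exact mul_nonneg (Real.rpow_nonneg (by linarith) _) (by linarith)

/-- Splitting the integral over the complement of the window. -/
lemma aux_intSplit (g : ℝ → ℝ) (hgc : Continuous g) (a j1 j2 M1 M2 : ℝ)
    (hj1nn : 0 ≤ j1) (hj12 : j1 < j2) (hj2a : j2 ≤ a) (hj2nn : 0 ≤ j2)
    (hgnn : ∀ w ∈ Icc (0:ℝ) a, 0 ≤ g w)
    (hM1 : ∀ w ∈ Icc (0:ℝ) j1, g w ≤ M1)
    (hM2 : ∀ w ∈ Icc j2 a, g w ≤ M2)
    (hM1nn : 0 ≤ M1) (hM2nn : 0 ≤ M2)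
    (j1ub u2 : ℝ) (hj1ub : j1 ≤ j1ub) (hau : a ≤ u2) :
    ∫ w in Icc (0:ℝ) a \ Icc j1 j2, g w ≤ j1ub * M1 + u2 * M2 := by
  have hj1a : j1 ≤ a := le_trans hj12.le hj2a
  have meas1 : MeasurableSet (Icc (0:ℝ) j1) := measurableSet_Icc
  have meas2 : MeasurableSet (Icc j2 a) := measurableSet_Icc
  have int1 : IntegrableOn g (Icc (0:ℝ) j1) volume := hgc.integrableOn_Icc
  have int2 : IntegrableOn g (Icc j2 a) volume := hgc.integrableOn_Icc
  have intU : IntegrableOn g (Icc (0:ℝ) j1 ∪ Icc j2 a) volume := int1.union int2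
  have hsub : (Icc (0:ℝ) a \ Icc j1 j2) ⊆ (Icc (0:ℝ) j1 ∪ Icc j2 a) := by
    intro x hx
    obtain ⟨⟨hx0, hxa⟩, hxJ⟩ := hx
    rcases lt_or_ge x j1 with h | h
    · exact Or.inl ⟨hx0, h.le⟩
    · have hx2 : ¬(x ≤ j2) := fun hle => hxJ ⟨h, hle⟩
      exact Or.inr ⟨(not_le.mp hx2).le, hxa⟩
  have hdisj : Disjoint (Icc (0:ℝ) j1) (Icc j2 a) := by
    rw [Set.disjoint_left]
    intro x h1 h2
    have := h1.2; have := h2.1; linarith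
  have hnnU : 0 ≤ᵐ[volume.restrict (Icc (0:ℝ) j1 ∪ Icc j2 a)] g := by
    rw [EventuallyLE, ae_restrict_iff' (meas1.union meas2)]
    apply ae_of_all
    intro x hx
    simp only [Pi.zero_apply]
    apply hgnn
    rcases hx with h | h
    · exact ⟨h.1, le_trans h.2 hj1a⟩
    · exact ⟨le_trans hj2nn h.1, h.2⟩
  calc ∫ w in Icc (0:ℝ) a \ Icc j1 j2, g w
      ≤ ∫ w in Icc (0:ℝ) j1 ∪ Icc j2 a, g w := by
        apply setIntegral_mono_set intU hnnU (HasSubset.Subset.eventuallyLE hsub)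
    _ = (∫ w in Icc (0:ℝ) j1, g w) + ∫ w in Icc j2 a, g w :=
        setIntegral_union hdisj meas2 int1 int2
    _ ≤ j1ub * M1 + u2 * M2 := by
        have b1 : ∫ w in Icc (0:ℝ) j1, g w ≤ j1 * M1 := by
          calc ∫ w in Icc (0:ℝ) j1, g w ≤ ∫ _ in Icc (0:ℝ) j1, M1 :=
              setIntegral_mono_on int1 (integrableOn_const measure_Icc_lt_top.ne)
                meas1 hM1
          _ = j1 * M1 := by
              rw [setIntegral_const, measureReal_def, Real.volume_Icc, smul_eq_mul,
                ENNReal.toReal_ofReal (by linarith)]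
              ring_nf
        have b2 : ∫ w in Icc j2 a, g w ≤ (a - j2) * M2 := by
          calc ∫ w in Icc j2 a, g w ≤ ∫ _ in Icc j2 a, M2 :=
              setIntegral_mono_on int2 (integrableOn_const measure_Icc_lt_top.ne)
                meas2 hM2
          _ = (a - j2) * M2 := by
              rw [setIntegral_const, measureReal_def, Real.volume_Icc, smul_eq_mul,
                ENNReal.toReal_ofReal (by linarith)]
        have c1 : j1 * M1 ≤ j1ub * M1 := mul_le_mul_of_nonneg_right hj1ub hM1nn
        have c2 : (a - j2) * M2 ≤ u2 * M2 := mul_le_mul_of_nonneg_right (by linarith) hM2nn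
        linarith

/-- The final algebraic computation. -/
lemma aux_finalAlg (d : ℕ) (C L Cd0 : ℝ) (hL0 : (0:ℝ) < L)
    (hCd0 : 0 < Cd0)
    (hF : L ^ ((5:ℝ)/3) * Real.exp (2 * L ^ ((1:ℝ)/6) - L ^ ((1:ℝ)/3)/8) ≤ 1) :
    L ^ ((6 * Real.sqrt 2 + 1) / 6) * (Real.exp L * L ^ (C * Real.sqrt 2) *
      ((2 * L ^ ((1:ℝ)/6)) * (((2*L) ^ (alphaD d) * (2 * L ^ ((1:ℝ)/6)) *
          Real.exp (-L + (Real.sqrt 2 + 1) + -(Real.sqrt 2*(C+1)*Real.log L)))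
            / (Cd0 * L ^ ((d:ℝ)/2)))
       + (2*L) * (((2*L) ^ (alphaD d) * (3 * L) *
          Real.exp (-L + Real.sqrt 2 + -(Real.sqrt 2*(C+1)*Real.log L)
            + (2 * L ^ ((1:ℝ)/6) - L ^ ((1:ℝ)/3)/8))) / (Cd0 * L ^ ((d:ℝ)/2)))))
    ≤ (2:ℝ) ^ (alphaD d) * (4 * Real.exp (Real.sqrt 2 + 1) + 6 * Real.exp (Real.sqrt 2))
        / Cd0 := by
  have hsplit : (2*L) ^ (alphaD d) = 2 ^ (alphaD d) * L ^ (alphaD d) :=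
    Real.mul_rpow (by norm_num) hL0.le
  have hexp1 : Real.exp (-L + (Real.sqrt 2 + 1) + -(Real.sqrt 2*(C+1)*Real.log L))
      = Real.exp (-L) * Real.exp (Real.sqrt 2 + 1) * L ^ (-(Real.sqrt 2*(C+1))) := by
    rw [show -(Real.sqrt 2*(C+1)*Real.log L) = Real.log L * (-(Real.sqrt 2*(C+1))) from by ring,
      Real.exp_add, Real.exp_add, ← Real.rpow_def_of_pos hL0]
  have hexp2 : Real.exp (-L + Real.sqrt 2 + -(Real.sqrt 2*(C+1)*Real.log L)
        + (2 * L ^ ((1:ℝ)/6) - L ^ ((1:ℝ)/3)/8))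
      = Real.exp (-L) * Real.exp (Real.sqrt 2) * L ^ (-(Real.sqrt 2*(C+1)))
          * Real.exp (2 * L ^ ((1:ℝ)/6) - L ^ ((1:ℝ)/3)/8) := by
    rw [show -L + Real.sqrt 2 + -(Real.sqrt 2*(C+1)*Real.log L)
        + (2 * L ^ ((1:ℝ)/6) - L ^ ((1:ℝ)/3)/8)
      = -L + Real.sqrt 2 + Real.log L * (-(Real.sqrt 2*(C+1)))
        + (2 * L ^ ((1:ℝ)/6) - L ^ ((1:ℝ)/3)/8) from by ring,
      Real.exp_add, Real.exp_add, Real.exp_add, ← Real.rpow_def_of_pos hL0]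
  have hexpL : Real.exp L * Real.exp (-L) = 1 := by
    rw [← Real.exp_add]; simp
  have powc1 : L ^ ((6 * Real.sqrt 2 + 1) / 6) * L ^ (C * Real.sqrt 2) * L ^ ((1:ℝ)/6)
      * L ^ (alphaD d) * L ^ ((1:ℝ)/6) * L ^ (-(Real.sqrt 2*(C+1))) / L ^ ((d:ℝ)/2) = 1 := by
    rw [div_eq_mul_inv, ← Real.rpow_neg hL0.le, ← Real.rpow_add hL0, ← Real.rpow_add hL0,
      ← Real.rpow_add hL0, ← Real.rpow_add hL0, ← Real.rpow_add hL0, ← Real.rpow_add hL0]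
    rw [show (6 * Real.sqrt 2 + 1) / 6 + C * Real.sqrt 2 + (1:ℝ)/6 + alphaD d + (1:ℝ)/6
        + -(Real.sqrt 2*(C+1)) + -((d:ℝ)/2) = 0 from by unfold alphaD; ring]
    exact Real.rpow_zero L
  have hLL : L * L = L ^ ((2:ℝ)) := by
    rw [show L ^ ((2:ℝ)) = L ^ ((1:ℝ) + 1) from by norm_num, Real.rpow_add hL0, Real.rpow_one]
  have powc2 : L ^ ((6 * Real.sqrt 2 + 1) / 6) * L ^ (C * Real.sqrt 2) * L ^ ((2:ℝ))
      * L ^ (alphaD d) * L ^ (-(Real.sqrt 2*(C+1))) / L ^ ((d:ℝ)/2) = L ^ ((5:ℝ)/3) := by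
    rw [div_eq_mul_inv, ← Real.rpow_neg hL0.le, ← Real.rpow_add hL0, ← Real.rpow_add hL0,
      ← Real.rpow_add hL0, ← Real.rpow_add hL0, ← Real.rpow_add hL0]
    rw [show (6 * Real.sqrt 2 + 1) / 6 + C * Real.sqrt 2 + (2:ℝ) + alphaD d
        + -(Real.sqrt 2*(C+1)) + -((d:ℝ)/2) = (5:ℝ)/3 from by unfold alphaD; ring]
  rw [hexp1, hexp2, hsplit, mul_add, mul_add]
  have T1 : L ^ ((6 * Real.sqrt 2 + 1) / 6) * (Real.exp L * L ^ (C * Real.sqrt 2) *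
      ((2 * L ^ ((1:ℝ)/6)) * ((2 ^ (alphaD d) * L ^ (alphaD d) * (2 * L ^ ((1:ℝ)/6)) *
        (Real.exp (-L) * Real.exp (Real.sqrt 2 + 1) * L ^ (-(Real.sqrt 2*(C+1)))))
          / (Cd0 * L ^ ((d:ℝ)/2)))))
      = 2 ^ (alphaD d) * (4 * Real.exp (Real.sqrt 2 + 1)) / Cd0 := by
    rw [show L ^ ((6 * Real.sqrt 2 + 1) / 6) * (Real.exp L * L ^ (C * Real.sqrt 2) *
      ((2 * L ^ ((1:ℝ)/6)) * ((2 ^ (alphaD d) * L ^ (alphaD d) * (2 * L ^ ((1:ℝ)/6)) *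
        (Real.exp (-L) * Real.exp (Real.sqrt 2 + 1) * L ^ (-(Real.sqrt 2*(C+1)))))
          / (Cd0 * L ^ ((d:ℝ)/2)))))
      = (2 ^ (alphaD d) * (4 * Real.exp (Real.sqrt 2 + 1)) / Cd0)
        * (Real.exp L * Real.exp (-L))
        * (L ^ ((6 * Real.sqrt 2 + 1) / 6) * L ^ (C * Real.sqrt 2) * L ^ ((1:ℝ)/6)
          * L ^ (alphaD d) * L ^ ((1:ℝ)/6) * L ^ (-(Real.sqrt 2*(C+1))) / L ^ ((d:ℝ)/2))
      from by field_simp; ring]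
    rw [hexpL, powc1]
    ring
  have T2 : L ^ ((6 * Real.sqrt 2 + 1) / 6) * (Real.exp L * L ^ (C * Real.sqrt 2) *
      ((2*L) * ((2 ^ (alphaD d) * L ^ (alphaD d) * (3 * L) *
        (Real.exp (-L) * Real.exp (Real.sqrt 2) * L ^ (-(Real.sqrt 2*(C+1)))
          * Real.exp (2 * L ^ ((1:ℝ)/6) - L ^ ((1:ℝ)/3)/8)))
          / (Cd0 * L ^ ((d:ℝ)/2)))))
      = (2 ^ (alphaD d) * (6 * Real.exp (Real.sqrt 2)) / Cd0)
          * (L ^ ((5:ℝ)/3) * Real.exp (2 * L ^ ((1:ℝ)/6) - L ^ ((1:ℝ)/3)/8)) := by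
    rw [show L ^ ((6 * Real.sqrt 2 + 1) / 6) * (Real.exp L * L ^ (C * Real.sqrt 2) *
      ((2*L) * ((2 ^ (alphaD d) * L ^ (alphaD d) * (3 * L) *
        (Real.exp (-L) * Real.exp (Real.sqrt 2) * L ^ (-(Real.sqrt 2*(C+1)))
          * Real.exp (2 * L ^ ((1:ℝ)/6) - L ^ ((1:ℝ)/3)/8)))
          / (Cd0 * L ^ ((d:ℝ)/2)))))
      = (2 ^ (alphaD d) * (6 * Real.exp (Real.sqrt 2)) / Cd0)
        * (Real.exp L * Real.exp (-L))
        * (L ^ ((6 * Real.sqrt 2 + 1) / 6) * L ^ (C * Real.sqrt 2) * (L * L)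
          * L ^ (alphaD d) * L ^ (-(Real.sqrt 2*(C+1))) / L ^ ((d:ℝ)/2))
        * Real.exp (2 * L ^ ((1:ℝ)/6) - L ^ ((1:ℝ)/3)/8)
      from by field_simp; ring]
    rw [hexpL, hLL, powc2]
    ring
  rw [T1, T2]
  have hc2 : (0:ℝ) ≤ 2 ^ (alphaD d) * (6 * Real.exp (Real.sqrt 2)) / Cd0 := by
    apply div_nonneg _ hCd0.le
    have : (0:ℝ) < (2:ℝ) ^ (alphaD d) := Real.rpow_pos_of_pos (by norm_num) _
    positivity
  have h2 : (2 ^ (alphaD d) * (6 * Real.exp (Real.sqrt 2)) / Cd0)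
      * (L ^ ((5:ℝ)/3) * Real.exp (2 * L ^ ((1:ℝ)/6) - L ^ ((1:ℝ)/3)/8))
      ≤ (2 ^ (alphaD d) * (6 * Real.exp (Real.sqrt 2)) / Cd0) * 1 :=
    mul_le_mul_of_nonneg_left hF hc2
  have h3 : 2 ^ (alphaD d) * (4 * Real.exp (Real.sqrt 2 + 1)) / Cd0
      + (2 ^ (alphaD d) * (6 * Real.exp (Real.sqrt 2)) / Cd0) * 1
      = 2 ^ (alphaD d) * (4 * Real.exp (Real.sqrt 2 + 1) + 6 * Real.exp (Real.sqrt 2)) / Cd0 := by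
    ring
  linarith

/-- Eventual bounds in `L`. -/
lemma aux_evA (C : ℝ) (hC : 0 < C) :
    ∀ᶠ L in atTop, (C+1) * Real.log L + 2 ≤ L ^ ((1:ℝ)/6) := by
  have hc : (0:ℝ) < 1/(2*(C+1)) := by positivity
  have hlo := ((isLittleO_log_rpow_atTop (show (0:ℝ) < 1/6 by norm_num)).def hc)
  filter_upwards [hlo, eventually_ge_atTop (1:ℝ),
    (tendsto_rpow_atTop (show (0:ℝ) < 1/6 by norm_num)).eventually_ge_atTop 4]
      with L h1 h2 h3
  have hp : (0:ℝ) ≤ L ^ ((1:ℝ)/6) := Real.rpow_nonneg (by linarith) _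
  have hlog : Real.log L ≤ (1/(2*(C+1))) * L ^ ((1:ℝ)/6) := by
    have := h1
    rw [Real.norm_eq_abs, Real.norm_eq_abs, abs_of_nonneg (Real.log_nonneg h2),
      abs_of_nonneg hp] at this
    exact this
  have h4 : (C+1) * Real.log L ≤ (C+1) * ((1/(2*(C+1))) * L ^ ((1:ℝ)/6)) :=
    mul_le_mul_of_nonneg_left hlog (by linarith)
  have h5 : (C+1) * ((1/(2*(C+1))) * L ^ ((1:ℝ)/6)) = L ^ ((1:ℝ)/6) / 2 := by
    field_simp
  linarith

lemma aux_evPow (y : ℝ) (hy : 0 < y) (c : ℝ) : ∀ᶠ L in atTop, c ≤ L ^ y :=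
  (tendsto_rpow_atTop hy).eventually_ge_atTop c

lemma aux_evF : ∀ᶠ L in atTop,
    L ^ ((5:ℝ)/3) * Real.exp (2 * L ^ ((1:ℝ)/6) - L ^ ((1:ℝ)/3)/8) ≤ 1 := by
  have hT : Tendsto (fun x:ℝ => x ^ ((5:ℝ)) * Real.exp (-(1/16) * x)) atTop (nhds 0) :=
    tendsto_rpow_mul_exp_neg_mul_atTop_nhds_zero 5 (1/16) (by norm_num)
  have hcomp := hT.comp (tendsto_rpow_atTop (show (0:ℝ) < 1/3 by norm_num))
  have hev1 := hcomp.eventually (eventually_le_nhds (show (0:ℝ) < 1 by norm_num))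
  filter_upwards [hev1, aux_evPow (1/6) (by norm_num) 32, eventually_ge_atTop (1:ℝ)]
    with L h1 h2 h0
  have hL0 : (0:ℝ) ≤ L := by linarith
  have hp13 : L ^ ((1:ℝ)/6) * L ^ ((1:ℝ)/6) = L ^ ((1:ℝ)/3) := by
    rw [← Real.rpow_add (by linarith : (0:ℝ) < L)]; norm_num
  have hsub : 2 * L ^ ((1:ℝ)/6) - L ^ ((1:ℝ)/3)/8 ≤ -(L ^ ((1:ℝ)/3))/16 := by
    have h32 : 32 * L ^ ((1:ℝ)/6) ≤ L ^ ((1:ℝ)/3) := by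
      rw [← hp13]
      exact mul_le_mul_of_nonneg_right h2 (Real.rpow_nonneg hL0 _)
    linarith
  have hmain : L ^ ((5:ℝ)/3) * Real.exp (-(L ^ ((1:ℝ)/3))/16) ≤ 1 := by
    have e1 : L ^ ((5:ℝ)/3) = (L ^ ((1:ℝ)/3)) ^ ((5:ℝ)) := by
      rw [← Real.rpow_mul hL0]; norm_num
    have e2 : -(L ^ ((1:ℝ)/3))/16 = -(1/16) * (L ^ ((1:ℝ)/3)) := by ring
    rw [e1, e2]
    exact h1
  calc L ^ ((5:ℝ)/3) * Real.exp (2 * L ^ ((1:ℝ)/6) - L ^ ((1:ℝ)/3)/8)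
      ≤ L ^ ((5:ℝ)/3) * Real.exp (-(L ^ ((1:ℝ)/3))/16) := by
        apply mul_le_mul_of_nonneg_left (Real.exp_le_exp.mpr hsub) (Real.rpow_nonneg hL0 _)
    _ ≤ 1 := hmain

lemma aux_evT (d : ℕ) (L : ℝ) (hL : 0 < L) : ∀ᶠ t in atTop, |oT d t| * L ≤ 1 := by
  have h1 : Tendsto (fun t:ℝ => Real.log t / t) atTop (nhds 0) :=
    Real.isLittleO_log_id_atTop.tendsto_div_nhds_zero
  have h2 : Tendsto (fun t:ℝ => oT d t) atTop (nhds 0) := by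
    have h3 := h1.const_mul (cD d)
    rw [mul_zero] at h3
    apply h3.congr
    intro t
    unfold oT
    rw [mul_div_assoc]
  have h4 := NormedAddCommGroup.tendsto_nhds_zero.mp h2 (1/L) (by positivity)
  filter_upwards [h4] with t ht
  rw [Real.norm_eq_abs] at ht
  calc |oT d t| * L ≤ (1/L)*L := mul_le_mul_of_nonneg_right ht.le hL.le
  _ = 1 := by field_simp

/-- The main quantitative estimate for a single pair `(L, t)`. -/
lemma aux_key (d : ℕ) (hd : 1 ≤ d) (C : ℝ) (hC : 0 < C) (L t : ℝ)
    (hL16 : 16 ≤ L)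
    (hA : (C+1) * Real.log L + 2 ≤ L ^ ((1:ℝ)/6))
    (hB : 2 * L ^ ((1:ℝ)/3) ≤ L)
    (hC2 : 2 ≤ L ^ ((2:ℝ)/3))
    (hG : 2 * L ^ ((1:ℝ)/6) ≤ L ^ ((2:ℝ)/3))
    (hE : L ^ ((1:ℝ)/6) ≤ L/2)
    (hH : L ^ ((2:ℝ)/3) ≤ L)
    (hF : L ^ ((5:ℝ)/3) * Real.exp (2 * L ^ ((1:ℝ)/6) - L ^ ((1:ℝ)/3)/8) ≤ 1)
    (htL : 2*L ≤ t) (hε : |oT d t| * L ≤ 1) :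
    L ^ ((6 * Real.sqrt 2 + 1) / 6) * UpsilonOut d C t L ≤ auxKc d C := by
  have hL0 : (0:ℝ) < L := by linarith
  have hL1 : (1:ℝ) ≤ L := by linarith
  have hlogL : 0 ≤ Real.log L := Real.log_nonneg hL1
  have ht0 : (0:ℝ) < t := by linarith
  have hs2 : Real.sqrt 2 ^ 2 = 2 := Real.sq_sqrt (by norm_num)
  have hs2nn : 0 ≤ Real.sqrt 2 := Real.sqrt_nonneg 2
  have hs2ge1 : (1:ℝ) ≤ Real.sqrt 2 := by nlinarith
  have hs2le : Real.sqrt 2 ≤ 3/2 := by nlinarith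
  have hdR : (1:ℝ) ≤ (d:ℝ) := by exact_mod_cast hd
  have hα : 0 ≤ alphaD d := by unfold alphaD; linarith
  obtain ⟨ε, hεdef⟩ : ∃ x, oT d t = x := ⟨_, rfl⟩
  rw [hεdef] at hε
  obtain ⟨δ, hδdef⟩ : ∃ x, ε * L + (C+1) * Real.log L = x := ⟨_, rfl⟩
  have ha : BL d C t L = Real.sqrt 2 * L + δ := by
    rw [← hδdef, ← hεdef]
    unfold BL mT oT
    field_simp
    ring
  have hεL : |ε * L| ≤ 1 := by
    rw [abs_mul, abs_of_nonneg hL0.le]; exact hε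
  have h2pow6 : 2 ≤ L ^ ((1:ℝ)/6) := by nlinarith [mul_nonneg (le_of_lt hC) hlogL]
  have hδabs : |δ| ≤ L ^ ((1:ℝ)/6) - 1 := by
    rw [← hδdef]
    calc |ε * L + (C+1) * Real.log L| ≤ |ε * L| + |(C+1) * Real.log L| := abs_add_le _ _
    _ ≤ 1 + (C+1) * Real.log L := by
        rw [abs_of_nonneg (show (0:ℝ) ≤ (C+1)*Real.log L from
          mul_nonneg (by linarith) hlogL)]
        linarith
    _ ≤ L ^ ((1:ℝ)/6) - 1 := by linarith
  have hδle : δ ≤ L ^ ((1:ℝ)/6) - 1 := le_trans (le_abs_self _) hδabs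
  have hδge : -(L ^ ((1:ℝ)/6) - 1) ≤ δ := neg_le_of_abs_le hδabs
  have hs2L : Real.sqrt 2 * L ≤ 3/2 * L := mul_le_mul_of_nonneg_right hs2le hL0.le
  have hLs2 : L ≤ Real.sqrt 2 * L := by
    nth_rewrite 1 [← one_mul L]
    exact mul_le_mul_of_nonneg_right hs2ge1 hL0.le
  -- the window endpoints
  have hj1x : oT d t * L + L ^ ((1:ℝ)/6) + (C+1) * Real.log L = δ + L ^ ((1:ℝ)/6) := by
    rw [← hδdef, ← hεdef]; ring
  have hj2x : oT d t * L + L ^ ((2:ℝ)/3) + (C+1) * Real.log L = δ + L ^ ((2:ℝ)/3) := by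
    rw [← hδdef, ← hεdef]; ring
  obtain ⟨j1, hj1def⟩ : ∃ x, δ + L ^ ((1:ℝ)/6) = x := ⟨_, rfl⟩
  obtain ⟨j2, hj2def⟩ : ∃ x, δ + L ^ ((2:ℝ)/3) = x := ⟨_, rfl⟩
  obtain ⟨a, hadef⟩ : ∃ x, Real.sqrt 2 * L + δ = x := ⟨_, rfl⟩
  have ha' : a = Real.sqrt 2 * L + δ := hadef.symm
  have hj1nn : 0 ≤ j1 := by rw [← hj1def]; linarith
  have hj1ub : j1 ≤ 2 * L ^ ((1:ℝ)/6) - 1 := by rw [← hj1def]; linarith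
  have hj2lb : L ^ ((2:ℝ)/3) / 2 ≤ j2 := by rw [← hj2def]; linarith
  have hj2nn : 0 ≤ j2 := by linarith
  have hj12 : j1 < j2 := by rw [← hj1def, ← hj2def]; linarith
  have hj2a : j2 ≤ a := by rw [← hj2def, ← hadef]; linarith
  have hj1a : j1 ≤ a := le_trans hj12.le hj2a
  have ha2L : a ≤ 2 * L := by rw [← hadef]; linarith
  -- the denominator
  obtain ⟨Cd0, hCd0def⟩ : ∃ x, (2:ℝ) ^ ((d:ℝ)/2 - 1) * Real.Gamma ((d:ℝ)/2) = x := ⟨_, rfl⟩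
  have hCd0 : 0 < Cd0 := by
    rw [← hCd0def]
    have h1 : (0:ℝ) < (2:ℝ) ^ ((d:ℝ)/2 - 1) := Real.rpow_pos_of_pos (by norm_num) _
    have h2 : (0:ℝ) < Real.Gamma ((d:ℝ)/2) := Real.Gamma_pos_of_pos (by linarith)
    positivity
  have hD : (0:ℝ) < Cd0 * L ^ ((d:ℝ)/2) :=
    mul_pos hCd0 (Real.rpow_pos_of_pos hL0 _)
  -- the continuous integrand
  obtain ⟨g, hgdef⟩ : ∃ g : ℝ → ℝ, (fun w => ((a-w) ^ (alphaD d) * Real.exp (-(a-w)^2/(2*L)) *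
      (1+w) * Real.exp (-Real.sqrt 2 * w)) / (Cd0 * L ^ ((d:ℝ)/2))) = g := ⟨_, rfl⟩
  have hgc : Continuous g := by
    rw [← hgdef]
    apply Continuous.div_const
    apply Continuous.mul
    apply Continuous.mul
    apply Continuous.mul
    · exact (continuous_const.sub continuous_id).rpow_const (fun x => Or.inr hα)
    · exact (((continuous_const.sub continuous_id).pow 2).neg.div_const _).rexp
    · exact continuous_const.add continuous_id
    · exact (continuous_const.mul continuous_id).rexp
  have hgnn : ∀ w ∈ Icc (0:ℝ) a, 0 ≤ g w := by
    intro w hw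
    rw [← hgdef]
    apply div_nonneg _ hD.le
    have h1 : 0 ≤ a - w := by linarith [hw.2]
    have h2 : 0 ≤ 1 + w := by linarith [hw.1]
    exact mul_nonneg (mul_nonneg (mul_nonneg (Real.rpow_nonneg h1 _)
      (Real.exp_nonneg _)) h2) (Real.exp_nonneg _)
  -- rewrite UpsilonOut in terms of g
  have hU : UpsilonOut d C t L = Real.exp L * L ^ (C * Real.sqrt 2) *
      ∫ w in Icc (0:ℝ) a \ Icc j1 j2, g w := by
    unfold UpsilonOut Jwin
    rw [hj1x, hj2x, hj1def, hj2def, ha, hadef]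
    congr 1
    apply setIntegral_congr_fun (measurableSet_Icc.diff measurableSet_Icc)
    intro w hw
    have hwa : w ≤ a := hw.1.2
    have hkey := aux_rpow_combine d (sub_nonneg.2 hwa)
    rw [← hgdef]
    simp only [rhoL]
    rw [hCd0def, ← hkey]
    ring
  -- pointwise bounds
  have hM1 : ∀ w ∈ Icc (0:ℝ) j1, g w ≤
      ((2*L) ^ (alphaD d) * (2 * L ^ ((1:ℝ)/6)) *
        Real.exp (-L + (Real.sqrt 2 + 1) + -(Real.sqrt 2*(C+1)*Real.log L)))
          / (Cd0 * L ^ ((d:ℝ)/2)) := by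
    intro w hw
    rw [← hgdef]
    apply div_le_div_of_nonneg_right ?_ ?_
    · exact aux_point1 d C L a δ j1 hL0 hα hs2 hs2nn ha' hδabs ε hδdef hεL hB hj1a hj1ub
        ha2L w hw
    · exact hD.le
  have hM2 : ∀ w ∈ Icc j2 a, g w ≤
      ((2*L) ^ (alphaD d) * (3 * L) *
        Real.exp (-L + Real.sqrt 2 + -(Real.sqrt 2*(C+1)*Real.log L)
          + (2 * L ^ ((1:ℝ)/6) - L ^ ((1:ℝ)/3)/8)))
          / (Cd0 * L ^ ((d:ℝ)/2)) := by
    intro w hw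
    rw [← hgdef]
    apply div_le_div_of_nonneg_right ?_ ?_
    · exact aux_point2 d C L a δ j2 hL0 hα hs2 hs2nn ha' hδabs ε hδdef hεL hj2lb hj2nn
        ha2L hL1 w hw
    · exact hD.le
  -- nonnegativity of the pointwise bounds
  have hpow6nn : (0:ℝ) ≤ L ^ ((1:ℝ)/6) := (Real.rpow_pos_of_pos hL0 _).le
  have hM1nn : (0:ℝ) ≤ ((2*L) ^ (alphaD d) * (2 * L ^ ((1:ℝ)/6)) *
      Real.exp (-L + (Real.sqrt 2 + 1) + -(Real.sqrt 2*(C+1)*Real.log L)))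
        / (Cd0 * L ^ ((d:ℝ)/2)) := by
    apply div_nonneg _ hD.le
    exact mul_nonneg (mul_nonneg (Real.rpow_nonneg (by linarith) _) (by linarith))
      (Real.exp_nonneg _)
  have hM2nn : (0:ℝ) ≤ ((2*L) ^ (alphaD d) * (3 * L) *
      Real.exp (-L + Real.sqrt 2 + -(Real.sqrt 2*(C+1)*Real.log L)
        + (2 * L ^ ((1:ℝ)/6) - L ^ ((1:ℝ)/3)/8)))
        / (Cd0 * L ^ ((d:ℝ)/2)) := by
    apply div_nonneg _ hD.le
    exact mul_nonneg (mul_nonneg (Real.rpow_nonneg (by linarith) _) (by linarith))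
      (Real.exp_nonneg _)
  -- the integral bound
  have hIle : ∫ w in Icc (0:ℝ) a \ Icc j1 j2, g w ≤
      (2 * L ^ ((1:ℝ)/6)) * (((2*L) ^ (alphaD d) * (2 * L ^ ((1:ℝ)/6)) *
        Real.exp (-L + (Real.sqrt 2 + 1) + -(Real.sqrt 2*(C+1)*Real.log L)))
          / (Cd0 * L ^ ((d:ℝ)/2)))
       + (2*L) * (((2*L) ^ (alphaD d) * (3 * L) *
        Real.exp (-L + Real.sqrt 2 + -(Real.sqrt 2*(C+1)*Real.log L)
          + (2 * L ^ ((1:ℝ)/6) - L ^ ((1:ℝ)/3)/8)))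
          / (Cd0 * L ^ ((d:ℝ)/2))) := by
    apply aux_intSplit g hgc a j1 j2 _ _ hj1nn hj12 hj2a hj2nn hgnn hM1 hM2 hM1nn hM2nn
      (2 * L ^ ((1:ℝ)/6)) (2*L) (by linarith) (by linarith)
  -- final assembly
  rw [hU]
  calc L ^ ((6 * Real.sqrt 2 + 1) / 6) * (Real.exp L * L ^ (C * Real.sqrt 2) *
        ∫ w in Icc (0:ℝ) a \ Icc j1 j2, g w)
      ≤ L ^ ((6 * Real.sqrt 2 + 1) / 6) * (Real.exp L * L ^ (C * Real.sqrt 2) *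
        ((2 * L ^ ((1:ℝ)/6)) * (((2*L) ^ (alphaD d) * (2 * L ^ ((1:ℝ)/6)) *
          Real.exp (-L + (Real.sqrt 2 + 1) + -(Real.sqrt 2*(C+1)*Real.log L)))
            / (Cd0 * L ^ ((d:ℝ)/2)))
         + (2*L) * (((2*L) ^ (alphaD d) * (3 * L) *
          Real.exp (-L + Real.sqrt 2 + -(Real.sqrt 2*(C+1)*Real.log L)
            + (2 * L ^ ((1:ℝ)/6) - L ^ ((1:ℝ)/3)/8))) / (Cd0 * L ^ ((d:ℝ)/2))))) := by
        apply mul_le_mul_of_nonneg_left _ (Real.rpow_nonneg hL0.le _)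
        apply mul_le_mul_of_nonneg_left hIle
          (mul_nonneg (Real.exp_nonneg _) (Real.rpow_nonneg hL0.le _))
    _ ≤ (2:ℝ) ^ (alphaD d) * (4 * Real.exp (Real.sqrt 2 + 1) + 6 * Real.exp (Real.sqrt 2))
          / Cd0 := aux_finalAlg d C L Cd0 hL0 hCd0 hF
    _ = auxKc d C := by unfold auxKc; rw [hCd0def]

/-- In the iterated limit `t → ∞` followed by `L → ∞`, the quantity `Υ'(t,L)` is
bounded above by a constant multiple of `L^{-(6√2+1)/6}`; i.e.
`limsup_{L→∞} limsup_{t→∞} L^{(6√2+1)/6}·Υ'(t,L) < ∞`. -/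
theorem upsilon_outside_window_upper
    (d : ℕ) (hd : 1 ≤ d) (C : ℝ) (hC : 0 < C) :
    ∃ K > (0 : ℝ), ∃ L₀ ≥ (1 : ℝ), ∀ L ≥ L₀, ∃ t₀ ≥ 2 * L, ∀ t ≥ t₀,
      L ^ ((6 * Real.sqrt 2 + 1) / 6) * UpsilonOut d C t L ≤ K := by
  have evB : ∀ᶠ (L:ℝ) in atTop, 2 * L ^ ((1:ℝ)/3) ≤ L := by
    filter_upwards [aux_evPow (2/3) (by norm_num) 2, eventually_ge_atTop (1:ℝ)] with L h1 h0
    have hL0 : (0:ℝ) < L := by linarith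
    have hid : L ^ ((2:ℝ)/3) * L ^ ((1:ℝ)/3) = L := by
      rw [← Real.rpow_add hL0, show (2:ℝ)/3 + 1/3 = 1 by norm_num, Real.rpow_one]
    calc 2 * L ^ ((1:ℝ)/3) ≤ L ^ ((2:ℝ)/3) * L ^ ((1:ℝ)/3) :=
        mul_le_mul_of_nonneg_right h1 (Real.rpow_nonneg hL0.le _)
    _ = L := hid
  have evG : ∀ᶠ (L:ℝ) in atTop, 2 * L ^ ((1:ℝ)/6) ≤ L ^ ((2:ℝ)/3) := by
    filter_upwards [aux_evPow (1/2) (by norm_num) 2, eventually_ge_atTop (1:ℝ)] with L h1 h0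
    have hL0 : (0:ℝ) < L := by linarith
    have hid : L ^ ((1:ℝ)/2) * L ^ ((1:ℝ)/6) = L ^ ((2:ℝ)/3) := by
      rw [← Real.rpow_add hL0]; norm_num
    calc 2 * L ^ ((1:ℝ)/6) ≤ L ^ ((1:ℝ)/2) * L ^ ((1:ℝ)/6) :=
        mul_le_mul_of_nonneg_right h1 (Real.rpow_nonneg hL0.le _)
    _ = L ^ ((2:ℝ)/3) := hid
  have evE : ∀ᶠ (L:ℝ) in atTop, L ^ ((1:ℝ)/6) ≤ L/2 := by
    filter_upwards [aux_evPow (5/6) (by norm_num) 2, eventually_ge_atTop (1:ℝ)] with L h1 h0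
    have hL0 : (0:ℝ) < L := by linarith
    have hid : L ^ ((5:ℝ)/6) * L ^ ((1:ℝ)/6) = L := by
      rw [← Real.rpow_add hL0, show (5:ℝ)/6 + 1/6 = 1 by norm_num, Real.rpow_one]
    have : 2 * L ^ ((1:ℝ)/6) ≤ L := by
      calc 2 * L ^ ((1:ℝ)/6) ≤ L ^ ((5:ℝ)/6) * L ^ ((1:ℝ)/6) :=
          mul_le_mul_of_nonneg_right h1 (Real.rpow_nonneg hL0.le _)
      _ = L := hid
    linarith
  have evH : ∀ᶠ (L:ℝ) in atTop, L ^ ((2:ℝ)/3) ≤ L := by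
    filter_upwards [eventually_ge_atTop (1:ℝ)] with L h0
    calc L ^ ((2:ℝ)/3) ≤ L ^ ((1:ℝ)) := Real.rpow_le_rpow_of_exponent_le h0 (by norm_num)
    _ = L := Real.rpow_one L
  have hall := (eventually_ge_atTop (16:ℝ)).and ((aux_evA C hC).and (evB.and
    ((aux_evPow (2/3) (by norm_num) 2).and (evG.and (evE.and (evH.and aux_evF))))))
  obtain ⟨L₀, hL₀⟩ := eventually_atTop.mp hall
  refine ⟨auxKc d C, auxKc_pos d hd C, max L₀ 1, le_max_right _ _, ?_⟩
  intro L hL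
  obtain ⟨h1, h2, h3, h4, h5, h6, h7, h8⟩ := hL₀ L (le_trans (le_max_left _ _) hL)
  have hL0 : (0:ℝ) < L := by linarith
  obtain ⟨t₁, ht₁⟩ := eventually_atTop.mp (aux_evT d L hL0)
  refine ⟨max t₁ (2*L), le_max_right _ _, fun t ht => ?_⟩
  exact aux_key d hd C hC L t h1 h2 h3 h4 h5 h6 h7 h8
    (le_trans (le_max_right _ _) ht) (ht₁ t (le_trans (le_max_left _ _) ht))

end
end

section
/- Let Υ(t, L) := e^L · L^{𝒞·√2} · ∫_{J_{L,t}} ρ_L(B(L)−w) · (B(L)−w)^{−α_d} · (1+w) · e^{−√2·w} dw. Then 0 < liminf_{L→∞} liminf_{t→∞} L^{(2√2−1)/2} · Υ(t, L) ≤ limsup_{L→∞} limsup_{t→∞} L^{(2√2−1)/2} · Υ(t, L) < ∞; that is, Υ(t, L) is comparable, up to positive constants, to L^{−(2√2−1)/2}, in the iterated limit t → ∞ followed by L → ∞. -/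
open MeasureTheory Filter Set

noncomputable section

/-- `Υ(t,L) = e^L·L^{𝒞√2}·∫_{J_{L,t}} ρ_L(B(L)-w)·(B(L)-w)^{-α_d}·(1+w)·e^{-√2 w} dw`. -/
def UpsilonIn (d : ℕ) (C t L : ℝ) : ℝ :=
  Real.exp L * L ^ (C * Real.sqrt 2) *
    ∫ w in Jwin d C t L,
      rhoL d L (BL d C t L - w) * (BL d C t L - w) ^ (-alphaD d) *
        (1 + w) * Real.exp (-Real.sqrt 2 * w)

def myKd (d : ℕ) : ℝ := (2 : ℝ) ^ ((d : ℝ) / 2 - 1) * Real.Gamma ((d : ℝ) / 2)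

lemma myKd_pos (d : ℕ) (hd : 1 ≤ d) : 0 < myKd d := by
  have h1 : (0:ℝ) < (d:ℝ) / 2 := by
    have : (1:ℝ) ≤ (d:ℝ) := by exact_mod_cast hd
    linarith
  exact mul_pos (Real.rpow_pos_of_pos (by norm_num) _) (Real.Gamma_pos_of_pos h1)

set_option maxHeartbeats 1000000 in
lemma main_bound (d : ℕ) (hd : 1 ≤ d) (C : ℝ) (hC : 0 < C) (L t : ℝ)
    (hL1 : 1 ≤ L) (hM : 1 + (C+1)*Real.log L ≤ L ^ ((1:ℝ)/4))
    (h12 : 2 ≤ L ^ ((1:ℝ)/12)) (h6 : 3 ≤ L ^ ((1:ℝ)/6))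
    (ht2 : 2 ≤ t) (hoL : |oT d t * L| ≤ 1) :
    Real.exp (-6) / myKd d ≤ L ^ ((2 * Real.sqrt 2 - 1) / 2) * UpsilonIn d C t L ∧
    L ^ ((2 * Real.sqrt 2 - 1) / 2) * UpsilonIn d C t L ≤
      2 ^ (((d:ℝ)-1)/2) * Real.exp 4 * 2 / myKd d := by
  have hLpos : (0:ℝ) < L := by linarith
  have hLne : L ≠ 0 := hLpos.ne'
  have hlogL : 0 ≤ Real.log L := Real.log_nonneg hL1
  have htpos : (0:ℝ) < t := by linarith
  have hKd := myKd_pos d hd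
  have hC1 : (0:ℝ) < C + 1 := by linarith
  set s : ℝ := Real.sqrt 2 with hs_def
  have hs2 : s^2 = 2 := Real.sq_sqrt (by norm_num)
  have hs0 : 0 ≤ s := Real.sqrt_nonneg 2
  have hs_le2 : s ≤ 2 := by nlinarith
  have hs_ge : (4:ℝ)/3 ≤ s := by nlinarith
  -- rpow tools
  have key : ∀ p q : ℝ, L ^ p * L ^ q = L ^ (p+q) := fun p q => (Real.rpow_add hLpos p q).symm
  have hmono : ∀ {x y : ℝ}, x ≤ y → L ^ x ≤ L ^ y :=
    fun h => Real.rpow_le_rpow_of_exponent_le hL1 h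
  have hone : ∀ x : ℝ, 0 ≤ x → 1 ≤ L ^ x := fun x hx => Real.one_le_rpow hL1 hx
  set ν : ℝ := ((d:ℝ)-1)/2 with hν_def
  have hν0 : 0 ≤ ν := by
    have : (1:ℝ) ≤ (d:ℝ) := by exact_mod_cast hd
    rw [hν_def]; linarith
  set o : ℝ := oT d t with ho_def
  set u : ℝ := o * L + (C+1) * Real.log L with hu_def
  set a : ℝ := o * L + L ^ ((1:ℝ)/6) + (C+1) * Real.log L with ha_def
  set b : ℝ := o * L + L ^ ((2:ℝ)/3) + (C+1) * Real.log L with hb_def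
  have hJ : Jwin d C t L = Icc a b := rfl
  have hBL : BL d C t L = s * L + u := by
    rw [hu_def, ho_def, hs_def]
    unfold BL mT oT
    field_simp
    ring
  -- basic endpoint facts
  have hoabs : -1 ≤ o * L ∧ o * L ≤ 1 := abs_le.mp hoL
  have hCL0 : 0 ≤ (C+1) * Real.log L := mul_nonneg hC1.le hlogL
  have e16 : (1:ℝ) ≤ L ^ ((1:ℝ)/6) := hone _ (by norm_num)
  have e16_23 : L ^ ((1:ℝ)/6) ≤ L ^ ((2:ℝ)/3) := hmono (by norm_num)
  have e16_14 : L ^ ((1:ℝ)/6) ≤ L ^ ((1:ℝ)/4) := hmono (by norm_num)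
  have e14_23 : L ^ ((1:ℝ)/4) ≤ L ^ ((2:ℝ)/3) := hmono (by norm_num)
  have e14 : (2:ℝ) ≤ L ^ ((1:ℝ)/4) := le_trans h12 (hmono (by norm_num))
  have hu_abs : |u| ≤ L ^ ((1:ℝ)/4) := by
    rw [hu_def, abs_le]
    refine ⟨by linarith [hoabs.1, hCL0, e14], by linarith [hoabs.2, hM]⟩
  have e13 : (3:ℝ) ≤ L ^ ((1:ℝ)/3) := le_trans h6 (hmono (by norm_num))
  have e23L : L ^ ((2:ℝ)/3) * L ^ ((1:ℝ)/3) = L := by rw [key]; norm_num [Real.rpow_one]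
  have e1414 : L ^ ((1:ℝ)/4) * L ^ ((1:ℝ)/4) = L ^ ((1:ℝ)/2) := by rw [key]; norm_num
  have e1212 : L ^ ((1:ℝ)/2) * L ^ ((1:ℝ)/2) = L := by rw [key]; norm_num [Real.rpow_one]
  have e12L : L ^ ((1:ℝ)/2) ≤ L := by
    calc L ^ ((1:ℝ)/2) ≤ L ^ (1:ℝ) := hmono (by norm_num)
    _ = L := Real.rpow_one L
  have e23Lle : L ^ ((2:ℝ)/3) ≤ L := by
    calc L ^ ((2:ℝ)/3) ≤ L ^ (1:ℝ) := hmono (by norm_num)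
    _ = L := Real.rpow_one L
  have e1223 : L ^ ((1:ℝ)/2) * L ^ ((1:ℝ)/6) = L ^ ((2:ℝ)/3) := by rw [key]; norm_num
  have e1423 : L ^ ((1:ℝ)/4) * L ^ ((2:ℝ)/3) ≤ L := by
    calc L ^ ((1:ℝ)/4) * L ^ ((2:ℝ)/3) = L ^ ((11:ℝ)/12) := by rw [key]; norm_num
    _ ≤ L ^ (1:ℝ) := hmono (by norm_num)
    _ = L := Real.rpow_one L
  have e23half : L ^ ((1:ℝ)/4) * (2 * L ^ ((2:ℝ)/3)) ≤ 2 * L := by linarith [e1423]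
  have hab : a ≤ b := by rw [ha_def, hb_def]; linarith
  have ha0 : 0 ≤ a := by rw [ha_def]; linarith [hoabs.1]
  have haub : a ≤ u + L ^ ((1:ℝ)/6) := by rw [ha_def, hu_def]; linarith
  have haeq : a = u + L ^ ((1:ℝ)/6) := by rw [ha_def, hu_def]; ring
  have hbeq : b = u + L ^ ((2:ℝ)/3) := by rw [hb_def, hu_def]; ring
  have hu_le : u ≤ L ^ ((1:ℝ)/4) := le_trans (le_abs_self u) hu_abs
  have hu_ge : -(L ^ ((1:ℝ)/4)) ≤ u := neg_le_of_abs_le hu_abs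
  have hu_ge1 : -1 - (0:ℝ) ≤ u := by rw [hu_def]; linarith [hoabs.1]
  have hbub : b ≤ 2 * L ^ ((2:ℝ)/3) := by
    rw [hbeq]; linarith [le_trans hu_le e14_23]
  -- the half-window [√L, 2√L]
  set c : ℝ := L ^ ((1:ℝ)/2) with hc_def
  have hc1 : 1 ≤ c := hone _ (by norm_num)
  have hac : a ≤ c := by
    have h2a : 2 * L ^ ((1:ℝ)/4) ≤ L ^ ((1:ℝ)/2) := by
      have h := mul_le_mul_of_nonneg_right e14 (Real.rpow_nonneg hLpos.le ((1:ℝ)/4))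
      rw [e1414] at h
      linarith
    rw [haeq, hc_def]
    linarith [hu_le, e16_14]
  have hcb : 2 * c ≤ b := by
    have h3c : 3 * c ≤ L ^ ((2:ℝ)/3) := by
      have h0c : (0:ℝ) ≤ c := by linarith
      have h := mul_le_mul_of_nonneg_left h6 h0c
      rw [e1223] at h
      linarith
    rw [hbeq]
    linarith [h3c, hc1, hu_ge1]
  -- products needed for Δ bound
  have e2L1112 : 2 * L ^ ((11:ℝ)/12) ≤ L := by
    have h := mul_le_mul_of_nonneg_left h12 (Real.rpow_nonneg hLpos.le ((11:ℝ)/12))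
    rw [key] at h
    norm_num [Real.rpow_one] at h
    linarith
  have e1112 : L ^ ((1:ℝ)/4) * L ^ ((2:ℝ)/3) = L ^ ((11:ℝ)/12) := by rw [key]; norm_num
  have hu2L : u^2 ≤ L := by
    have h1 : |u| * |u| ≤ L ^ ((1:ℝ)/4) * L ^ ((1:ℝ)/4) :=
      mul_le_mul hu_abs hu_abs (abs_nonneg u) (Real.rpow_nonneg hLpos.le _)
    rw [e1414, abs_mul_abs_self] at h1
    calc u^2 = u * u := sq u
    _ ≤ c := h1
    _ ≤ L := e12L
  have hulog : u - (C+1) * Real.log L = o * L := by rw [hu_def]; ring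
  -- per-point facts on the window
  have hwin : ∀ w ∈ Icc a b, 0 ≤ w ∧ w ≤ 2 * L ^ ((2:ℝ)/3) ∧
      L ≤ s*L + u - w ∧ s*L + u - w ≤ 2*L := by
    intro w hw
    obtain ⟨hwa, hwb⟩ := hw
    have hw0 : 0 ≤ w := le_trans ha0 hwa
    have hwub : w ≤ 2 * L ^ ((2:ℝ)/3) := le_trans hwb hbub
    have h23 : L ^ ((2:ℝ)/3) * 3 ≤ L := by
      have h := mul_le_mul_of_nonneg_left e13 (Real.rpow_nonneg hLpos.le ((2:ℝ)/3))
      rw [e23L] at h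
      linarith
    have hsL : (1:ℝ)/3 * L ≤ (s - 1) * L :=
      mul_le_mul_of_nonneg_right (by linarith) hLpos.le
    constructor
    · exact hw0
    refine ⟨hwub, ?_, ?_⟩
    · have : w ≤ u + L ^ ((2:ℝ)/3) := by rw [← hbeq]; exact hwb
      linarith
    · have : u + L ^ ((1:ℝ)/6) ≤ w := by rw [← haeq]; exact hwa
      have hsL2 : s * L ≤ 2 * L := mul_le_mul_of_nonneg_right hs_le2 hLpos.le
      linarith [e16]
  -- the per-point two-sided bound
  set A : ℝ := Real.exp (-L) * L ^ (-(s*(C+1))) / (myKd d * L ^ ((d:ℝ)/2)) with hA_def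
  have hApos : 0 < A := by
    apply div_pos (mul_pos (Real.exp_pos _) (Real.rpow_pos_of_pos hLpos _))
    exact mul_pos hKd (Real.rpow_pos_of_pos hLpos _)
  set F : ℝ → ℝ := fun w => rhoL d L (BL d C t L - w) * (BL d C t L - w) ^ (-alphaD d) *
      (1 + w) * Real.exp (-s * w) with hF_def
  have claim : ∀ w ∈ Icc a b,
      (Real.exp (-4) * L ^ ν * A) * ((1+w) * Real.exp (-w ^ 2 / (2*L))) ≤ F w ∧
      F w ≤
        ((2:ℝ) ^ ν * Real.exp 4 * L ^ ν * A) * ((1+w) * Real.exp (-w ^ 2 / (2*L))) := by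
    intro w hw
    rw [hF_def]
    obtain ⟨hw0, hwub, hrL, hr2L⟩ := hwin w hw
    have hrpos : (0:ℝ) < s*L + u - w := lt_of_lt_of_le hLpos hrL
    set r : ℝ := s*L + u - w with hr_def
    have hBw : BL d C t L - w = r := by rw [hBL]
    set Δ : ℝ := -s*(u - (C+1)*Real.log L) - u^2/(2*L) + u*w/L with hΔ_def
    -- bound on Δ
    have hΔ_bdd : -4 ≤ Δ ∧ Δ ≤ 4 := by
      have h1 : |s * (o*L)| ≤ 2 := by
        rw [abs_mul, abs_of_nonneg hs0]
        calc s * |o*L| ≤ 2 * 1 := mul_le_mul hs_le2 hoL (abs_nonneg _) (by norm_num)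
        _ = 2 := by norm_num
      obtain ⟨h1a, h1b⟩ := abs_le.mp h1
      have h2 : 0 ≤ u^2/(2*L) := by positivity
      have h2b : u^2/(2*L) ≤ 1 := by
        rw [div_le_one (by linarith)]
        linarith
      have h3 : |u*w/L| ≤ 1 := by
        rw [abs_div, abs_of_pos hLpos, div_le_one hLpos]
        calc |u*w| = |u| * w := by rw [abs_mul, abs_of_nonneg hw0]
        _ ≤ L ^ ((1:ℝ)/4) * (2 * L ^ ((2:ℝ)/3)) :=
            mul_le_mul hu_abs hwub hw0 (Real.rpow_nonneg hLpos.le _)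
        _ = 2 * L ^ ((11:ℝ)/12) := by rw [← e1112]; ring
        _ ≤ L := e2L1112
      obtain ⟨h3a, h3b⟩ := abs_le.mp h3
      rw [hΔ_def, hulog]
      constructor <;> linarith
    have hΔlo : Real.exp (-4) ≤ Real.exp Δ := Real.exp_le_exp.mpr hΔ_bdd.1
    have hΔhi : Real.exp Δ ≤ Real.exp 4 := Real.exp_le_exp.mpr hΔ_bdd.2
    -- the exponential identity
    have hid : -r ^ 2 / (2*L) + (-s*w) =
        Δ + (-L + (Real.log L * (-(s*(C+1))) + -w ^ 2 / (2*L))) := by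
      rw [hr_def, hΔ_def]
      field_simp
      linear_combination (-L^2) * hs2
    have hexp_eq : Real.exp (-r ^ 2 / (2*L)) * Real.exp (-s*w) =
        Real.exp Δ * (Real.exp (-L) * (L ^ (-(s*(C+1))) * Real.exp (-w ^ 2 / (2*L)))) := by
      rw [Real.rpow_def_of_pos hLpos, ← Real.exp_add, ← Real.exp_add, ← Real.exp_add, ← Real.exp_add]
      exact congrArg Real.exp hid
    -- the power identity
    have hpow : r ^ ((d:ℝ)-1) * r ^ (-alphaD d) = r ^ ν := by
      rw [← Real.rpow_add hrpos]
      congr 1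
      unfold alphaD
      rw [hν_def]
      ring
    -- the main pointwise rewriting
    have hFeq : (fun w => rhoL d L (BL d C t L - w) * (BL d C t L - w) ^ (-alphaD d) *
          (1 + w) * Real.exp (-s * w)) w
        = (r ^ ν * Real.exp Δ) * (A * ((1+w) * Real.exp (-w ^ 2 / (2*L)))) := by
      simp only
      rw [hBw]
      calc rhoL d L r * r ^ (-alphaD d) * (1 + w) * Real.exp (-s * w)
          = (r ^ ((d:ℝ)-1) * r ^ (-alphaD d)) *
            ((Real.exp (-r ^ 2 / (2*L)) * Real.exp (-s*w)) * (1+w)) /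
              (myKd d * L ^ ((d:ℝ)/2)) := by
            unfold rhoL myKd
            ring
        _ = (r ^ ν) * ((Real.exp Δ * (Real.exp (-L) * (L ^ (-(s*(C+1))) *
              Real.exp (-w ^ 2 / (2*L))))) * (1+w)) / (myKd d * L ^ ((d:ℝ)/2)) := by
            rw [hpow, hexp_eq]
        _ = (r ^ ν * Real.exp Δ) * (A * ((1+w) * Real.exp (-w ^ 2 / (2*L)))) := by
            rw [hA_def]
            ring
    have hgpos : 0 ≤ (1+w) * Real.exp (-w ^ 2 / (2*L)) :=
      mul_nonneg (by linarith) (Real.exp_nonneg _)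
    have hAg : 0 ≤ A * ((1+w) * Real.exp (-w ^ 2 / (2*L))) := mul_nonneg hApos.le hgpos
    have hrlow : L ^ ν ≤ r ^ ν := Real.rpow_le_rpow hLpos.le hrL hν0
    have hrhigh : r ^ ν ≤ 2 ^ ν * L ^ ν := by
      calc r ^ ν ≤ (2*L) ^ ν := Real.rpow_le_rpow (by linarith) hr2L hν0
      _ = 2 ^ ν * L ^ ν := Real.mul_rpow (by norm_num) hLpos.le
    constructor
    · rw [hFeq]
      calc Real.exp (-4) * L ^ ν * A * ((1+w) * Real.exp (-w ^ 2 / (2*L)))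
          = (L ^ ν * Real.exp (-4)) * (A * ((1+w) * Real.exp (-w ^ 2 / (2*L)))) := by ring
        _ ≤ (r ^ ν * Real.exp Δ) * (A * ((1+w) * Real.exp (-w ^ 2 / (2*L)))) := by
            apply mul_le_mul_of_nonneg_right ?_ hAg
            exact mul_le_mul hrlow hΔlo (Real.exp_nonneg _) (Real.rpow_nonneg hrpos.le _)
    · rw [hFeq]
      calc (r ^ ν * Real.exp Δ) * (A * ((1+w) * Real.exp (-w ^ 2 / (2*L))))
          ≤ (2 ^ ν * L ^ ν * Real.exp 4) * (A * ((1+w) * Real.exp (-w ^ 2 / (2*L)))) := by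
            apply mul_le_mul_of_nonneg_right ?_ hAg
            exact mul_le_mul hrhigh hΔhi (Real.exp_nonneg _)
              (mul_nonneg (Real.rpow_nonneg (by norm_num) _) (Real.rpow_nonneg hLpos.le _))
        _ = (2 ^ ν * Real.exp 4 * L ^ ν * A) * ((1+w) * Real.exp (-w ^ 2 / (2*L))) := by ring
  -- continuity and integrability
  have hrLB : ∀ w ∈ Icc a b, L ≤ BL d C t L - w := fun w hw => by
    rw [hBL]; exact (hwin w hw).2.2.1
  have hFcont : ContinuousOn F (Icc a b) := by
    have hb : ContinuousOn (fun w : ℝ => BL d C t L - w) (Icc a b) :=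
      (continuous_const.sub continuous_id).continuousOn
    have hbne : ∀ w ∈ Icc a b, BL d C t L - w ≠ 0 := fun w hw =>
      ne_of_gt (lt_of_lt_of_le hLpos (hrLB w hw))
    have h1 : ContinuousOn (fun w => (BL d C t L - w) ^ ((d:ℝ)-1)) (Icc a b) :=
      hb.rpow_const (fun w hw => Or.inl (hbne w hw))
    have h2 : ContinuousOn (fun w => Real.exp (-(BL d C t L - w) ^ 2 / (2*L))) (Icc a b) :=
      Real.continuous_exp.comp_continuousOn (((hb.pow 2).neg).div_const (2*L))
    have h3 : ContinuousOn (fun w => (BL d C t L - w) ^ (-alphaD d)) (Icc a b) :=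
      hb.rpow_const (fun w hw => Or.inl (hbne w hw))
    have h4 : Continuous (fun w : ℝ => 1 + w) := continuous_const.add continuous_id
    have h5 : Continuous (fun w : ℝ => Real.exp (-s * w)) :=
      Real.continuous_exp.comp (continuous_const.mul continuous_id)
    rw [hF_def]
    simp only [rhoL]
    exact ((((h1.mul h2).div_const _).mul h3).mul h4.continuousOn).mul h5.continuousOn
  have hFint : IntegrableOn F (Icc a b) := hFcont.integrableOn_Icc
  have hEcont : Continuous (fun w : ℝ => Real.exp (-w ^ 2 / (2*L))) :=
    Real.continuous_exp.comp (((continuous_pow 2).neg).div_const _)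
  have hgcont : Continuous (fun w : ℝ => (1+w) * Real.exp (-w ^ 2 / (2*L))) :=
    (continuous_const.add continuous_id).mul hEcont
  have hgint : IntegrableOn (fun w : ℝ => (1+w) * Real.exp (-w ^ 2 / (2*L))) (Icc a b) :=
    hgcont.integrableOn_Icc
  have hwEcont : Continuous (fun w : ℝ => w * Real.exp (-w ^ 2 / (2*L))) :=
    continuous_id.mul hEcont
  -- upper bound for the Gaussian-type integral
  have hIup : (∫ w in Icc a b, (1+w) * Real.exp (-w ^ 2 / (2*L))) ≤ 2 * L := by
    have hfuneq : (fun w : ℝ => (1+w) * Real.exp (-w ^ 2 / (2*L)))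
        = fun w : ℝ => Real.exp (-w ^ 2 / (2*L)) + w * Real.exp (-w ^ 2 / (2*L)) := by
      funext w; ring
    have hsplit : (∫ w in Icc a b, (1+w) * Real.exp (-w ^ 2 / (2*L)))
        = (∫ w in Icc a b, Real.exp (-w ^ 2 / (2*L)))
          + ∫ w in Icc a b, w * Real.exp (-w ^ 2 / (2*L)) := by
      rw [hfuneq]
      exact integral_add hEcont.integrableOn_Icc hwEcont.integrableOn_Icc
    have hb1 : (∫ w in Icc a b, Real.exp (-w ^ 2 / (2*L))) ≤ L := by
      have h1 : (∫ w in Icc a b, Real.exp (-w ^ 2 / (2*L))) ≤ ∫ _ in Icc a b, (1:ℝ) := by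
        apply setIntegral_mono_on hEcont.integrableOn_Icc
          (integrableOn_const (by rw [Real.volume_Icc]; exact ENNReal.ofReal_ne_top))
          measurableSet_Icc
        intro x _
        apply Real.exp_le_one_iff.mpr
        rw [neg_div]
        exact neg_nonpos.mpr (by positivity)
      have h2 : (∫ _ in Icc a b, (1:ℝ)) = b - a := by
        rw [setIntegral_const, Real.volume_real_Icc_of_le (by linarith : a ≤ b), smul_eq_mul, mul_one]
      have h3 : b - a ≤ L := by
        rw [hb_def, ha_def]
        have h4 : (0:ℝ) ≤ L ^ ((1:ℝ)/6) := Real.rpow_nonneg hLpos.le _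
        linarith [e23Lle]
      linarith
    have hb2 : (∫ w in Icc a b, w * Real.exp (-w ^ 2 / (2*L))) ≤ L := by
      have hFTC : ∀ x ∈ uIcc a b, HasDerivAt (fun x : ℝ => -L * Real.exp (-x ^ 2 / (2*L)))
          (x * Real.exp (-x ^ 2 / (2*L))) x := by
        intro x _
        have h1 : HasDerivAt (fun x : ℝ => -x ^ 2 / (2*L)) (-(2*x) / (2*L)) x := by
          simpa using ((hasDerivAt_pow 2 x).neg).div_const (2*L)
        have h3 := (h1.exp).const_mul (-L)
        refine h3.congr_deriv ?_
        field_simp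
      have heq : (∫ w in Icc a b, w * Real.exp (-w ^ 2 / (2*L)))
          = ∫ w in a..b, w * Real.exp (-w ^ 2 / (2*L)) := by
        rw [intervalIntegral.integral_of_le hab, integral_Icc_eq_integral_Ioc]
      have hval := intervalIntegral.integral_eq_sub_of_hasDerivAt hFTC
        (hwEcont.intervalIntegrable a b)
      rw [heq, hval]
      have h4 : Real.exp (-a ^ 2 / (2*L)) ≤ 1 := by
        apply Real.exp_le_one_iff.mpr
        rw [neg_div]
        exact neg_nonpos.mpr (by positivity)
      have h5 : (0:ℝ) ≤ L * Real.exp (-b ^ 2 / (2*L)) :=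
        mul_nonneg hLpos.le (Real.exp_nonneg _)
      have h6 : L * Real.exp (-a ^ 2 / (2*L)) ≤ L := by
        calc L * Real.exp (-a ^ 2 / (2*L)) ≤ L * 1 := mul_le_mul_of_nonneg_left h4 hLpos.le
        _ = L := mul_one L
      linarith
    linarith
  -- lower bound for the Gaussian-type integral
  have hIlo : Real.exp (-2) * L ≤ ∫ w in Icc a b, (1+w) * Real.exp (-w ^ 2 / (2*L)) := by
    have hsub : Icc c (2*c) ⊆ Icc a b := Icc_subset_Icc hac hcb
    have hcpos : (0:ℝ) < c := lt_of_lt_of_le one_pos hc1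
    have h1 : (∫ w in Icc c (2*c), (1+w) * Real.exp (-w ^ 2 / (2*L)))
        ≤ ∫ w in Icc a b, (1+w) * Real.exp (-w ^ 2 / (2*L)) := by
      refine setIntegral_mono_set hgint ?_ (HasSubset.Subset.eventuallyLE hsub)
      rw [EventuallyLE, ae_restrict_iff' measurableSet_Icc]
      refine ae_of_all _ (fun x hx => ?_)
      simp only [Pi.zero_apply]
      exact mul_nonneg (by linarith [hx.1, ha0]) (Real.exp_nonneg _)
    have hconst : (∫ _ in Icc c (2*c), c * Real.exp (-(2:ℝ))) = Real.exp (-2) * L := by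
      rw [setIntegral_const, Real.volume_real_Icc_of_le (by linarith : c ≤ 2*c), smul_eq_mul]
      have h5 : (2*c - c) * (c * Real.exp (-(2:ℝ))) = (c * c) * Real.exp (-(2:ℝ)) := by ring
      rw [h5, e1212]
      ring
    have h2 : Real.exp (-2) * L ≤ ∫ w in Icc c (2*c), (1+w) * Real.exp (-w ^ 2 / (2*L)) := by
      rw [← hconst]
      apply setIntegral_mono_on
        (integrableOn_const (by rw [Real.volume_Icc]; exact ENNReal.ofReal_ne_top))
        (hgint.mono_set hsub) measurableSet_Icc
      intro x hx
      obtain ⟨hx1, hx2⟩ := hx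
      have hx0 : (0:ℝ) ≤ x := le_trans hcpos.le hx1
      have hx4 : x * x ≤ (2*c) * (2*c) := mul_le_mul hx2 hx2 hx0 (by linarith)
      have hxsq : x^2 ≤ 4 * L := by
        have h7 : (2*c) * (2*c) = 4 * (c*c) := by ring
        rw [h7, e1212] at hx4
        rw [pow_two]
        linarith
      have hE : Real.exp (-(2:ℝ)) ≤ Real.exp (-x ^ 2 / (2*L)) := by
        apply Real.exp_le_exp.mpr
        rw [neg_div]
        have h6 : x^2/(2*L) ≤ 2 := by rw [div_le_iff₀ (by linarith)]; linarith
        linarith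
      exact mul_le_mul (by linarith) hE (Real.exp_nonneg _) (by linarith)
    linarith
  -- combine with pointwise bounds
  have hlow_int : (Real.exp (-4) * L ^ ν * A) * (Real.exp (-2) * L) ≤ ∫ w in Icc a b, F w := by
    have hpos : (0:ℝ) ≤ Real.exp (-4) * L ^ ν * A := by positivity
    calc (Real.exp (-4) * L ^ ν * A) * (Real.exp (-2) * L)
        ≤ (Real.exp (-4) * L ^ ν * A) * ∫ w in Icc a b, (1+w) * Real.exp (-w ^ 2 / (2*L)) :=
          mul_le_mul_of_nonneg_left hIlo hpos
      _ = ∫ w in Icc a b, (Real.exp (-4) * L ^ ν * A) * ((1+w) * Real.exp (-w ^ 2 / (2*L))) :=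
          (integral_const_mul _ _).symm
      _ ≤ ∫ w in Icc a b, F w := by
          apply setIntegral_mono_on ((continuous_const.mul hgcont).integrableOn_Icc) hFint
            measurableSet_Icc
          exact fun w hw => (claim w hw).1
  have hup_int : (∫ w in Icc a b, F w) ≤ (2 ^ ν * Real.exp 4 * L ^ ν * A) * (2 * L) := by
    have hpos : (0:ℝ) ≤ 2 ^ ν * Real.exp 4 * L ^ ν * A := by positivity
    calc (∫ w in Icc a b, F w)
        ≤ ∫ w in Icc a b, (2 ^ ν * Real.exp 4 * L ^ ν * A) * ((1+w) * Real.exp (-w ^ 2 / (2*L))) := by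
          apply setIntegral_mono_on hFint ((continuous_const.mul hgcont).integrableOn_Icc)
            measurableSet_Icc
          exact fun w hw => (claim w hw).2
      _ = (2 ^ ν * Real.exp 4 * L ^ ν * A) * ∫ w in Icc a b, (1+w) * Real.exp (-w ^ 2 / (2*L)) :=
          integral_const_mul _ _
      _ ≤ (2 ^ ν * Real.exp 4 * L ^ ν * A) * (2 * L) := mul_le_mul_of_nonneg_left hIup hpos
  -- the rpow bookkeeping
  have hLpart : L ^ ((2*s-1)/2) * L ^ (C*s) * L ^ ν * L ^ (-(s*(C+1))) * L / L ^ ((d:ℝ)/2) = 1 := by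
    have hdiv : L / L ^ ((d:ℝ)/2) = L ^ (1 - (d:ℝ)/2) := by
      rw [Real.rpow_sub hLpos, Real.rpow_one]
    calc L ^ ((2*s-1)/2) * L ^ (C*s) * L ^ ν * L ^ (-(s*(C+1))) * L / L ^ ((d:ℝ)/2)
        = L ^ ((2*s-1)/2) * L ^ (C*s) * L ^ ν * L ^ (-(s*(C+1))) * (L / L ^ ((d:ℝ)/2)) := by
          ring
      _ = L ^ ((2*s-1)/2 + C*s + ν + (-(s*(C+1))) + (1 - (d:ℝ)/2)) := by
          rw [hdiv, key, key, key, key]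
      _ = L ^ (0:ℝ) := by
          congr 1
          rw [hν_def]
          ring
      _ = 1 := Real.rpow_zero L
  have hzero : Real.exp L * Real.exp (-L) = 1 := by rw [← Real.exp_add]; simp
  have h46 : Real.exp (-4) * Real.exp (-2) = Real.exp (-6) := by
    rw [← Real.exp_add]; norm_num
  have hUps : UpsilonIn d C t L = Real.exp L * L ^ (C*s) * ∫ w in Icc a b, F w := by
    rw [hF_def]
    simp only [UpsilonIn, hJ, ← hs_def]
  have hklower : L ^ ((2*s-1)/2) * (Real.exp L * L ^ (C*s) *
      ((Real.exp (-4) * L ^ ν * A) * (Real.exp (-2) * L))) = Real.exp (-6) / myKd d := by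
    rw [hA_def]
    calc L ^ ((2*s-1)/2) * (Real.exp L * L ^ (C*s) *
          ((Real.exp (-4) * L ^ ν * (Real.exp (-L) * L ^ (-(s*(C+1))) /
            (myKd d * L ^ ((d:ℝ)/2)))) * (Real.exp (-2) * L)))
        = (Real.exp L * Real.exp (-L)) * ((Real.exp (-4) * Real.exp (-2)) *
            ((L ^ ((2*s-1)/2) * L ^ (C*s) * L ^ ν * L ^ (-(s*(C+1))) * L / L ^ ((d:ℝ)/2))
              / myKd d)) := by
          ring
      _ = Real.exp (-6) / myKd d := by rw [hzero, h46, hLpart]; ring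
  have hkupper : L ^ ((2*s-1)/2) * (Real.exp L * L ^ (C*s) *
      ((2 ^ ν * Real.exp 4 * L ^ ν * A) * (2 * L))) = 2 ^ ν * Real.exp 4 * 2 / myKd d := by
    rw [hA_def]
    calc L ^ ((2*s-1)/2) * (Real.exp L * L ^ (C*s) *
          ((2 ^ ν * Real.exp 4 * L ^ ν * (Real.exp (-L) * L ^ (-(s*(C+1))) /
            (myKd d * L ^ ((d:ℝ)/2)))) * (2 * L)))
        = (Real.exp L * Real.exp (-L)) * ((2 ^ ν * Real.exp 4 * 2) *
            ((L ^ ((2*s-1)/2) * L ^ (C*s) * L ^ ν * L ^ (-(s*(C+1))) * L / L ^ ((d:ℝ)/2))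
              / myKd d)) := by
          ring
      _ = 2 ^ ν * Real.exp 4 * 2 / myKd d := by rw [hzero, hLpart]; ring
  have hPE : (0:ℝ) ≤ Real.exp L * L ^ (C*s) :=
    mul_nonneg (Real.exp_nonneg _) (Real.rpow_nonneg hLpos.le _)
  have hP : (0:ℝ) ≤ L ^ ((2*s-1)/2) := Real.rpow_nonneg hLpos.le _
  constructor
  · rw [hUps, ← hklower]
    exact mul_le_mul_of_nonneg_left (mul_le_mul_of_nonneg_left hlow_int hPE) hP
  · rw [hUps, ← hkupper]
    exact mul_le_mul_of_nonneg_left (mul_le_mul_of_nonneg_left hup_int hPE) hP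


lemma oT_small (d : ℕ) (L t : ℝ) (hL : 1 ≤ L)
    (ht : max (2*L) (4*(|cD d| * L+1)^2) ≤ t) : |oT d t * L| ≤ 1 ∧ 2 ≤ t := by
  have ht2 : 2 ≤ t := le_trans (by linarith [le_max_left (2*L) (4*(|cD d| * L+1)^2)]) le_rfl
  have htpos : (0:ℝ) < t := by linarith
  have hlogpos : 0 ≤ Real.log t := Real.log_nonneg (by linarith)
  refine ⟨?_, ht2⟩
  set X : ℝ := |cD d| * L + 1 with hX
  have hXpos : 0 < X := by positivity
  set q : ℝ := Real.sqrt t with hq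
  have hqpos : 0 < q := Real.sqrt_pos.mpr htpos
  have htq : t = q * q := (Real.mul_self_sqrt htpos.le).symm
  have hlogt : Real.log t ≤ 2 * q := by
    have h1 : Real.log t = 2 * Real.log q := by
      rw [htq, Real.log_mul hqpos.ne' hqpos.ne']; ring
    have h2 : Real.log q ≤ q - 1 := Real.log_le_sub_one_of_pos hqpos
    linarith
  have hq2X : 2 * X ≤ q := by
    have h4 : 4 * X^2 ≤ t := le_trans (le_max_right _ _) ht
    nlinarith [htq]
  have key : |cD d| * Real.log t * L ≤ t := by
    nlinarith [hlogpos, hqpos, hXpos, hlogt, hq2X]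
  have habs : |oT d t * L| = |cD d| * Real.log t / t * L := by
    rw [abs_mul, abs_of_nonneg (by linarith : (0:ℝ) ≤ L)]
    congr 1
    unfold oT
    rw [abs_div, abs_of_pos htpos, abs_mul, abs_of_nonneg hlogpos]
  rw [habs, div_mul_eq_mul_div, div_le_one htpos]
  linarith [key]

/-- In the iterated limit `t → ∞` followed by `L → ∞`, the quantity `Υ(t,L)` is
comparable, up to positive constants, to `L^{-(2√2-1)/2}`; i.e.
`0 < liminf_{L→∞} liminf_{t→∞} L^{(2√2-1)/2}·Υ(t,L)`
`≤ limsup_{L→∞} limsup_{t→∞} L^{(2√2-1)/2}·Υ(t,L) < ∞`. -/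
theorem upsilon_window_two_sided
    (d : ℕ) (hd : 1 ≤ d) (C : ℝ) (hC : 0 < C) :
    ∃ k K : ℝ, 0 < k ∧ k ≤ K ∧ ∃ L₀ ≥ (1 : ℝ), ∀ L ≥ L₀, ∃ t₀ ≥ 2 * L, ∀ t ≥ t₀,
      k ≤ L ^ ((2 * Real.sqrt 2 - 1) / 2) * UpsilonIn d C t L ∧
      L ^ ((2 * Real.sqrt 2 - 1) / 2) * UpsilonIn d C t L ≤ K := by
  have hKd := myKd_pos d hd
  refine ⟨Real.exp (-6) / myKd d, 2 ^ (((d:ℝ)-1)/2) * Real.exp 4 * 2 / myKd d,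
    div_pos (Real.exp_pos _) hKd, ?_, ?_⟩
  · apply div_le_div_of_nonneg_right ?_ hKd.le
    have h1 : (1:ℝ) ≤ 2 ^ (((d:ℝ)-1)/2) := Real.one_le_rpow (by norm_num) (by
      have : (1:ℝ) ≤ (d:ℝ) := by exact_mod_cast hd
      linarith)
    nlinarith [Real.exp_le_one_iff.mpr (by norm_num : (-6:ℝ) ≤ 0),
      Real.one_le_exp (by norm_num : (0:ℝ) ≤ 4), Real.exp_pos (-6:ℝ)]
  · have hEv : ∀ᶠ L in atTop, 1 ≤ L ∧ (1 + (C+1)*Real.log L ≤ L ^ ((1:ℝ)/4))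
        ∧ 2 ≤ L ^ ((1:ℝ)/12) ∧ 3 ≤ L ^ ((1:ℝ)/6) := by
      have hlog : Real.log =o[atTop] fun x : ℝ => x ^ ((1:ℝ)/4) :=
        isLittleO_log_rpow_atTop (by norm_num)
      have h1 : ∀ᶠ L : ℝ in atTop, |Real.log L| ≤ (1/(2*(C+1))) * |L ^ ((1:ℝ)/4)| :=
        hlog.bound (by positivity)
      have h2 : ∀ᶠ L : ℝ in atTop, (2:ℝ) ≤ L ^ ((1:ℝ)/12) :=
        (tendsto_rpow_atTop (by norm_num)).eventually_ge_atTop 2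
      have h3 : ∀ᶠ L : ℝ in atTop, (3:ℝ) ≤ L ^ ((1:ℝ)/6) :=
        (tendsto_rpow_atTop (by norm_num)).eventually_ge_atTop 3
      have h4 : ∀ᶠ L : ℝ in atTop, (2:ℝ) ≤ L ^ ((1:ℝ)/4) :=
        (tendsto_rpow_atTop (by norm_num)).eventually_ge_atTop 2
      filter_upwards [eventually_ge_atTop (1:ℝ), h1, h2, h3, h4] with L hL1 h1 h2 h3 h4
      refine ⟨hL1, ?_, h2, h3⟩
      have hp : (0:ℝ) ≤ L ^ ((1:ℝ)/4) := Real.rpow_nonneg (by linarith) _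
      have hlogle : (C+1) * Real.log L ≤ (1/2) * L ^ ((1:ℝ)/4) := by
        rw [abs_of_nonneg hp] at h1
        have h5 : Real.log L ≤ |Real.log L| := le_abs_self _
        have hC1 : (0:ℝ) < C + 1 := by linarith
        calc (C+1) * Real.log L ≤ (C+1) * ((1/(2*(C+1))) * L ^ ((1:ℝ)/4)) :=
              mul_le_mul_of_nonneg_left (le_trans h5 h1) hC1.le
          _ = (1/2) * L ^ ((1:ℝ)/4) := by field_simp
      linarith
    obtain ⟨N, hN⟩ := eventually_atTop.mp hEv
    refine ⟨max 1 N, le_max_left _ _, fun L hL => ?_⟩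
    obtain ⟨hL1, hM, h12, h6⟩ := hN L (le_trans (le_max_right 1 N) hL)
    refine ⟨max (2*L) (4*(|cD d| * L+1)^2), le_max_left _ _, fun t ht => ?_⟩
    obtain ⟨hoL, ht2⟩ := oT_small d L t hL1 ht
    exact main_bound d hd C hC L t hL1 hM h12 h6 ht2 hoL

end
end

section
/- Uniform two-sided asymptotics of the rescaled chi density near the barrier: There exist constants 0 < c ≤ C and L₀ ≥ 1 such that for every L ≥ L₀ there exists t₀ ≥ 2L such that for all t ≥ t₀ and all w ∈ [0, B(L)]: c·Φ(w) ≤ ρ_L(B(L)−w) ≤ C·Φ(w), where Φ(w) := (B(L)−w)^{d−1} · L^{−(d−1)/2} · L^{−1/2 − (1+𝒞)·√2} · e^{−L} · exp( −w²/(2L) + (√2 + (𝒞+1)·(log L)/L)·w ). -/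
open MeasureTheory Filter Set

noncomputable section

/-- The comparison function
`Φ(w) = (B(L)-w)^{d-1}·L^{-(d-1)/2}·L^{-1/2-(1+𝒞)√2}·e^{-L}·exp(-w²/(2L) + (√2+(𝒞+1)(log L)/L)·w)`. -/
def PhiCmp (d : ℕ) (C t L w : ℝ) : ℝ :=
  (BL d C t L - w) ^ ((d : ℝ) - 1) * L ^ (-(((d : ℝ) - 1) / 2)) *
    L ^ (-(1 : ℝ) / 2 - (1 + C) * Real.sqrt 2) * Real.exp (-L) *
    Real.exp (-w ^ 2 / (2 * L) + (Real.sqrt 2 + (C + 1) * Real.log L / L) * w)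

lemma hB_eq (d : ℕ) (C t L : ℝ) (ht : t ≠ 0) :
    BL d C t L = Real.sqrt 2 * L + (oT d t * L + (C + 1) * Real.log L) := by
  unfold BL mT oT; field_simp; ring

lemma rho_eq_phi (d : ℕ) (hd : 1 ≤ d) (C t L w : ℝ) (hL : 0 < L) (ht : t ≠ 0) :
    rhoL d L (BL d C t L - w) =
      PhiCmp d C t L w *
        Real.exp (-(Real.sqrt 2 * (oT d t * L))
          - (oT d t * L + (C + 1) * Real.log L) ^ 2 / (2 * L) + w * oT d t) /
        ((2 : ℝ) ^ ((d : ℝ) / 2 - 1) * Real.Gamma ((d : ℝ) / 2)) := by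
  have hd1 : (1:ℝ) ≤ (d:ℝ) := by exact_mod_cast hd
  have hG : (0:ℝ) < (2 : ℝ) ^ ((d : ℝ) / 2 - 1) * Real.Gamma ((d : ℝ) / 2) :=
    mul_pos (Real.rpow_pos_of_pos two_pos _) (Real.Gamma_pos_of_pos (by linarith))
  have hs : Real.sqrt 2 ^ 2 = 2 := Real.sq_sqrt (by norm_num)
  rw [rhoL, PhiCmp]
  rw [Real.rpow_def_of_pos hL ((d:ℝ)/2), Real.rpow_def_of_pos hL (-(((d : ℝ) - 1) / 2)),
    Real.rpow_def_of_pos hL (-(1 : ℝ) / 2 - (1 + C) * Real.sqrt 2)]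
  have key : Real.exp (-(BL d C t L - w) ^ 2 / (2 * L)) =
      Real.exp (Real.log L * (-(((d : ℝ) - 1) / 2)))
      * Real.exp (Real.log L * (-(1 : ℝ) / 2 - (1 + C) * Real.sqrt 2))
      * Real.exp (-L)
      * Real.exp (-w ^ 2 / (2 * L) + (Real.sqrt 2 + (C + 1) * Real.log L / L) * w)
      * Real.exp (-(Real.sqrt 2 * (oT d t * L))
          - (oT d t * L + (C + 1) * Real.log L) ^ 2 / (2 * L) + w * oT d t)
      * Real.exp (Real.log L * ((d:ℝ)/2)) := by
    rw [← Real.exp_add, ← Real.exp_add, ← Real.exp_add, ← Real.exp_add, ← Real.exp_add]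
    congr 1
    rw [hB_eq d C t L ht]
    set s := Real.sqrt 2
    set o := oT d t
    set ℓ := Real.log L
    have hL' : L ≠ 0 := hL.ne'
    field_simp
    linear_combination (-L^2)*hs
  rw [key]
  field_simp [Real.exp_ne_zero]

/-- **Uniform two-sided asymptotics of the rescaled chi density near the barrier.**
There are `0 < c ≤ K` and `L₀ ≥ 1` such that for every `L ≥ L₀` there is `t₀ ≥ 2L`
such that for all `t ≥ t₀` and all `w ∈ [0, B(L)]`,
`c·Φ(w) ≤ ρ_L(B(L)-w) ≤ K·Φ(w)`. -/
theorem chi_density_near_barrier_two_sided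
    (d : ℕ) (hd : 1 ≤ d) (C : ℝ) (hC : 0 < C) :
    ∃ c K : ℝ, 0 < c ∧ c ≤ K ∧ ∃ L₀ ≥ (1 : ℝ), ∀ L ≥ L₀, ∃ t₀ ≥ 2 * L, ∀ t ≥ t₀,
      ∀ w ∈ Icc (0 : ℝ) (BL d C t L),
        c * PhiCmp d C t L w ≤ rhoL d L (BL d C t L - w) ∧
        rhoL d L (BL d C t L - w) ≤ K * PhiCmp d C t L w := by
  have hd1 : (1:ℝ) ≤ (d:ℝ) := by exact_mod_cast hd
  set G := (2 : ℝ) ^ ((d : ℝ) / 2 - 1) * Real.Gamma ((d : ℝ) / 2) with hGdef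
  have hG : (0:ℝ) < G :=
    mul_pos (Real.rpow_pos_of_pos two_pos _) (Real.Gamma_pos_of_pos (by linarith))
  refine ⟨Real.exp (-3) / G, Real.exp 3 / G, by positivity,
    div_le_div_of_nonneg_right (Real.exp_le_exp.mpr (by norm_num)) hG.le, ?_⟩
  -- choice of L₀
  have hsq : Tendsto (fun L : ℝ => (2*(C+1)^2) * (Real.log L ^ 2 / (1*L+0))) atTop (nhds 0) := by
    simpa using (Real.tendsto_pow_log_div_mul_add_atTop 1 0 2 one_ne_zero).const_mul (2*(C+1)^2)
  obtain ⟨A, hA⟩ := eventually_atTop.mp (hsq.eventually_lt_const one_pos)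
  refine ⟨max 4 A, le_trans (by norm_num) (le_max_left _ _), ?_⟩
  intro L hL
  have hL4 : (4:ℝ) ≤ L := le_trans (le_max_left _ _) hL
  have hL1 : (1:ℝ) ≤ L := by linarith
  have hLpos : (0:ℝ) < L := by linarith
  have hℓ0 : 0 ≤ Real.log L := Real.log_nonneg hL1
  set ℓ := Real.log L with hℓdef
  have hLsq : 2*(C+1)^2*ℓ^2 ≤ L := by
    have := hA L (le_trans (le_max_right _ _) hL)
    have h2 : (2*(C+1)^2) * (ℓ ^ 2 / (1*L+0)) < 1 := this
    rw [one_mul, add_zero, ← mul_div_assoc] at h2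
    have h3 := (div_lt_one hLpos).mp h2
    linarith
  set s := Real.sqrt 2 with hsdef
  have hs0 : (0:ℝ) ≤ s := Real.sqrt_nonneg 2
  have hs2 : s ^ 2 = 2 := Real.sq_sqrt (by norm_num)
  have hsle : s ≤ 2 := by nlinarith
  have hsL0 : 0 ≤ s*L := mul_nonneg hs0 hLpos.le
  have hCl0 : 0 ≤ (C+1)*ℓ := mul_nonneg (by linarith) hℓ0
  set M := s*L + L + (C+1)*ℓ with hMdef
  have hM0 : (0:ℝ) < M := by rw [hMdef]; linarith
  have hLM : L ≤ M := by rw [hMdef]; linarith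
  -- choice of t₀
  have hot : Tendsto (fun t : ℝ => cD d * (Real.log t ^ 1 / (1*t+0))) atTop (nhds 0) := by
    simpa using (Real.tendsto_pow_log_div_mul_add_atTop 1 0 1 one_ne_zero).const_mul (cD d)
  have hot' : Tendsto (fun t : ℝ => |cD d * (Real.log t ^ 1 / (1*t+0))|) atTop (nhds 0) := by
    simpa using hot.abs
  obtain ⟨T, hT⟩ := eventually_atTop.mp (hot'.eventually_lt_const (by positivity : (0:ℝ) < 1/M))
  refine ⟨max (2*L) T, le_max_left _ _, ?_⟩
  intro t ht
  have ht2L : 2*L ≤ t := le_trans (le_max_left _ _) ht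
  have ht0 : (0:ℝ) < t := by linarith
  have htne : t ≠ 0 := ht0.ne'
  have hoabs : |oT d t| < 1/M := by
    have := hT t (le_trans (le_max_right _ _) ht)
    have heq : oT d t = cD d * (Real.log t ^ 1 / (1*t+0)) := by rw [oT]; ring
    rw [heq]; exact this
  set o := oT d t with hodef
  set ao := |o| with haodef
  have hao0 : 0 ≤ ao := abs_nonneg o
  have hoU : o ≤ ao := le_abs_self o
  have hoL' : -ao ≤ o := neg_abs_le o
  have hMao : ao * M ≤ 1 := by
    have := (le_div_iff₀ hM0).mp hoabs.le
    linarith [this]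
  intro w hw
  obtain ⟨hw0, hwB⟩ := hw
  rw [hB_eq d C t L htne] at hwB
  set a := o*L + (C+1)*ℓ with hadef
  -- bound s*(o*L)
  have hsLM : s*L ≤ M := by rw [hMdef]; linarith
  have f1 : s*L*o ≤ s*L*ao := mul_le_mul_of_nonneg_left hoU (by positivity)
  have f1' : s*L*(-ao) ≤ s*L*o := mul_le_mul_of_nonneg_left hoL' (by positivity)
  have f2 : s*L*ao ≤ M*ao := mul_le_mul_of_nonneg_right hsLM hao0
  have c1u : s*(o*L) ≤ 1 := by linarith [f1, f2, hMao]
  have c1l : -1 ≤ s*(o*L) := by linarith [f1', f2, hMao]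
  -- bound a^2/(2L)
  have f3 : o*L ≤ ao*L := mul_le_mul_of_nonneg_right hoU hLpos.le
  have f3' : (-ao)*L ≤ o*L := mul_le_mul_of_nonneg_right hoL' hLpos.le
  have haoL : ao*L ≤ 1 := by
    have h5 := mul_le_mul_of_nonneg_left hLM hao0
    linarith [h5, hMao]
  have hau : a ≤ 1 + (C+1)*ℓ := by rw [hadef]; linarith
  have hal : -(1 + (C+1)*ℓ) ≤ a := by rw [hadef]; linarith
  have haa : a^2 ≤ (1 + (C+1)*ℓ)^2 := sq_le_sq' hal hau
  have ha2L : a^2 ≤ 2*L := by linarith [haa, hLsq, hL4, sq_nonneg (1 - (C+1)*ℓ)]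
  have c2u : a^2/(2*L) ≤ 1 := by rw [div_le_one (by positivity)]; linarith
  have c2l : 0 ≤ a^2/(2*L) := by positivity
  -- bound w*o
  have hBM : s*L + a ≤ M := by rw [hadef, hMdef]; linarith
  have f4 : w*o ≤ w*ao := mul_le_mul_of_nonneg_left hoU hw0
  have f4' : w*(-ao) ≤ w*o := mul_le_mul_of_nonneg_left hoL' hw0
  have f5 : w*ao ≤ (s*L + a)*ao := mul_le_mul_of_nonneg_right hwB hao0
  have f6 : (s*L + a)*ao ≤ M*ao := mul_le_mul_of_nonneg_right hBM hao0
  have c3u : w*o ≤ 1 := by linarith [f4, f5, f6, hMao]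
  have c3l : -1 ≤ w*o := by linarith [f4', f5, f6, hMao]
  -- exponent bounds
  set E := -(s*(o*L)) - a^2/(2*L) + w*o with hEdef
  have hE1 : -3 ≤ E := by rw [hEdef]; linarith
  have hE2 : E ≤ 3 := by rw [hEdef]; linarith
  -- nonnegativity of Phi
  have hBw : 0 ≤ BL d C t L - w := by rw [hB_eq d C t L htne]; linarith
  have hΦ : 0 ≤ PhiCmp d C t L w := by
    rw [PhiCmp]
    exact mul_nonneg (mul_nonneg (mul_nonneg (mul_nonneg (Real.rpow_nonneg hBw _)
      (Real.rpow_pos_of_pos hLpos _).le) (Real.rpow_pos_of_pos hLpos _).le)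
      (Real.exp_pos _).le) (Real.exp_pos _).le
  have hid := rho_eq_phi d hd C t L w hLpos htne
  rw [← hGdef] at hid
  have hEeq : -(s * (o * L)) - (o * L + (C + 1) * ℓ) ^ 2 / (2 * L) + w * o = E := by
    rw [hEdef, hadef]
  rw [hEeq] at hid
  rw [hid]
  constructor
  · have h1 : Real.exp (-3) ≤ Real.exp E := Real.exp_le_exp.mpr hE1
    have h2 : PhiCmp d C t L w * Real.exp (-3) ≤ PhiCmp d C t L w * Real.exp E :=
      mul_le_mul_of_nonneg_left h1 hΦ
    calc Real.exp (-3) / G * PhiCmp d C t L w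
        = PhiCmp d C t L w * Real.exp (-3) / G := by ring
      _ ≤ PhiCmp d C t L w * Real.exp E / G := div_le_div_of_nonneg_right h2 hG.le
  · have h1 : Real.exp E ≤ Real.exp 3 := Real.exp_le_exp.mpr hE2
    have h2 : PhiCmp d C t L w * Real.exp E ≤ PhiCmp d C t L w * Real.exp 3 :=
      mul_le_mul_of_nonneg_left h1 hΦ
    calc PhiCmp d C t L w * Real.exp E / G
        ≤ PhiCmp d C t L w * Real.exp 3 / G := div_le_div_of_nonneg_right h2 hG.le
      _ = Real.exp 3 / G * PhiCmp d C t L w := by ring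

end
end

section
/- Uniform expansion of the Gaussian transition density between the two windows: For every ε > 0 there exists L₀ ≥ 1 such that for every L ≥ L₀ there exists t₀ > 2L such that for all t ≥ t₀, all z ∈ [L^{1/6}, L^{2/3}] and all w ∈ [−log ℓ, 𝐲(t/√d)]: | g_{t̃−ℓ}( 𝐲(w) − 𝐱(z) ) / Υ_g(w) − 1 | ≤ ε, where Υ_g(w) := (2π)^{−1/2} · t^{1−α_d} · e^{−(t̃−ℓ)} · e^{−√2·(z+y)} · e^{√2·w} · exp( −w²/(2(t̃−ℓ)) ) · exp( (y + z + 𝔠_d·log t)·w/(t̃−ℓ) ). -/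
open MeasureTheory ProbabilityTheory Filter Set

noncomputable section

/-- `𝐱(z) = √2·L - z`. -/
def xZ (L z : ℝ) : ℝ := Real.sqrt 2 * L - z

/-- `𝐲(w) = (m_t/t)·(t - ℓ) + y - w`, where `ℓ = ℓ(L)`. -/
def yW (d : ℕ) (y : ℝ) (lf : ℝ → ℝ) (t L w : ℝ) : ℝ := mT d t / t * (t - lf L) + y - w

/-- The centered Gaussian density with variance `T`: `g_T(u) = (2πT)^{-1/2}·exp(-u²/(2T))`. -/
def gaussDens (T u : ℝ) : ℝ :=
  (2 * Real.pi * T) ^ (-(1 : ℝ) / 2) * Real.exp (-u ^ 2 / (2 * T))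

/-- The comparison quantity `Υ_g(w)` of the Gaussian transition density between the two
windows. -/
def UpsGauss (d : ℕ) (y : ℝ) (lf : ℝ → ℝ) (t L z w : ℝ) : ℝ :=
  (2 * Real.pi) ^ (-(1 : ℝ) / 2) * t ^ (1 - alphaD d) * Real.exp (-(t - L - lf L)) *
    Real.exp (-(Real.sqrt 2) * (z + y)) * Real.exp (Real.sqrt 2 * w) *
    Real.exp (-w ^ 2 / (2 * (t - L - lf L))) *
    Real.exp ((y + z + cD d * Real.log t) * w / (t - L - lf L))

lemma gauss_ratio (d : ℕ) (y l t L z w : ℝ) (ht : 0 < t) (hT : 0 < t - L - l) :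
    gaussDens (t - L - l) ((mT d t / t * (t - l) + y - w) - xZ L z)
    = ((2 * Real.pi) ^ (-(1:ℝ)/2) * t ^ (1 - alphaD d) * Real.exp (-(t - L - l)) *
        Real.exp (-(Real.sqrt 2) * (z + y)) * Real.exp (Real.sqrt 2 * w) *
        Real.exp (-w ^ 2 / (2 * (t - L - l))) *
        Real.exp ((y + z + cD d * Real.log t) * w / (t - L - l)))
      * ((t / (t - L - l)) ^ ((1:ℝ)/2) *
         Real.exp (Real.sqrt 2 * cD d * l * Real.log t / t
           - (cD d * Real.log t + y + z - cD d * l * Real.log t / t) ^ 2 / (2 * (t - L - l))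
           - cD d * l * Real.log t * w / (t * (t - L - l)))) := by
  have h2T : (2 * Real.pi * (t - L - l)) ^ (-(1:ℝ)/2)
      = (2 * Real.pi) ^ (-(1:ℝ)/2) * Real.exp (Real.log (t - L - l) * (-(1:ℝ)/2)) := by
    rw [Real.mul_rpow (by positivity) hT.le, Real.rpow_def_of_pos hT]
  have ht1 : t ^ (1 - alphaD d) = Real.exp (Real.log t * (1 - alphaD d)) :=
    Real.rpow_def_of_pos ht _
  have hdiv : (t / (t - L - l)) ^ ((1:ℝ)/2)
      = Real.exp ((Real.log t - Real.log (t - L - l)) * ((1:ℝ)/2)) := by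
    rw [Real.rpow_def_of_pos (div_pos ht hT), Real.log_div ht.ne' hT.ne']
  rw [gaussDens, h2T, ht1, hdiv]
  simp only [mul_assoc, ← Real.exp_add]
  congr 1
  rw [Real.exp_eq_exp]
  set s := Real.sqrt 2 with hs
  have hs0 : (0:ℝ) < s := by rw [hs]; positivity
  have hs2 : s ^ 2 = 2 := Real.sq_sqrt (by norm_num)
  set lt := Real.log t
  set T := t - L - l with hTdef
  set lT := Real.log T
  set c := cD d with hc
  set B : ℝ := c * lt + y + z - c * l * lt / t with hB
  have hu : (mT d t / t * (t - l) + y - w) - xZ L z = s * T + (B - w) := by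
    rw [mT, xZ, hB, hTdef, ← hc, ← hs]
    field_simp
    ring
  rw [hu]
  have key : (s * T + (B - w)) ^ 2
      = 2 * T ^ 2 + 2 * s * T * (B - w) + (B - w) ^ 2 := by
    linear_combination T ^ 2 * hs2
  rw [key, hB, hc, alphaD, cD, ← hs]
  field_simp
  ring

set_option maxHeartbeats 1000000 in
/-- **Uniform expansion of the Gaussian transition density between the two windows.**
For every `ε > 0`, for all sufficiently large `L` and then all sufficiently large `t`,
uniformly over `z ∈ [L^{1/6}, L^{2/3}]` and `w ∈ [-log ℓ, 𝐲(t/√d)]`,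
`g_{t̃-ℓ}(𝐲(w) - 𝐱(z))` equals `Υ_g(w)` up to a multiplicative factor within `ε` of `1`. -/
theorem gaussian_density_expansion
    (d : ℕ) (hd : 2 ≤ d) (y : ℝ) (lf : ℝ → ℝ)
    (hlf : ∀ L ≥ (1 : ℝ), 1 ≤ lf L ∧ lf L ≤ L ^ ((1 : ℝ) / 6))
    (hlftop : Tendsto lf atTop atTop) (ε : ℝ) (hε : 0 < ε) :
    ∃ L₀ ≥ (1 : ℝ), ∀ L ≥ L₀, ∃ t₀ > 2 * L, ∀ t ≥ t₀,
      ∀ z ∈ Icc (L ^ ((1 : ℝ) / 6)) (L ^ ((2 : ℝ) / 3)),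
      ∀ w ∈ Icc (-Real.log (lf L)) (yW d y lf t L (t / Real.sqrt d)),
        |gaussDens (t - L - lf L) (yW d y lf t L w - xZ L z)
            / UpsGauss d y lf t L z w - 1| ≤ ε := by
  set δ : ℝ := min (ε/5) 1 with hδdef
  have hδ0 : 0 < δ := lt_min (by linarith) one_pos
  have hδ1 : δ ≤ 1 := min_le_right _ _
  have hδε : δ ≤ ε/5 := min_le_left _ _
  refine ⟨1, le_refl 1, fun L hL => ?_⟩
  obtain ⟨hl1, hl6⟩ := hlf L hL
  set l : ℝ := lf L with hl
  have hl0 : (0:ℝ) < l := by linarith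
  set c : ℝ := |cD d| with hcdef
  have hc0 : 0 ≤ c := abs_nonneg _
  have hs0 : (0:ℝ) < Real.sqrt 2 := by positivity
  set K : ℝ := c * (1 + l) + |y| + L ^ ((2:ℝ)/3) with hK
  have hL23 : (0:ℝ) ≤ L ^ ((2:ℝ)/3) := Real.rpow_nonneg (by linarith) _
  have hK0 : 0 ≤ K := by positivity
  -- basic tendsto facts
  have ha : Tendsto (fun t : ℝ => Real.log t / t) atTop (nhds 0) := by
    simpa using Real.tendsto_pow_log_div_mul_add_atTop 1 0 1 one_ne_zero
  have hb : Tendsto (fun t : ℝ => Real.log t ^ 2 / t) atTop (nhds 0) := by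
    simpa using Real.tendsto_pow_log_div_mul_add_atTop 1 0 2 one_ne_zero
  have hc1 : Tendsto (fun t : ℝ => 1 / t) atTop (nhds 0) := by
    simpa using tendsto_inv_atTop_zero (𝕜 := ℝ)
  have hd2 : Tendsto (fun t : ℝ => Real.log t / t ^ 2) atTop (nhds 0) := by
    have h := ha.mul hc1
    rw [mul_zero] at h
    exact h.congr (fun x => by ring)
  -- eventual conditions
  have E0 : ∀ᶠ t : ℝ in atTop, 2*(L+l) + 2 ≤ t := eventually_ge_atTop _
  have E1 : ∀ᶠ t : ℝ in atTop, Real.sqrt 2 * c * l * (Real.log t / t) < δ/3 := by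
    have h := ha.const_mul (Real.sqrt 2 * c * l)
    rw [mul_zero] at h
    exact h.eventually_lt_const (by linarith)
  have E2 : ∀ᶠ t : ℝ in atTop,
      K^2*(1/t + 2*(Real.log t/t) + Real.log t^2/t) < δ/3 := by
    have h := ((hc1.add (ha.const_mul 2)).add hb).const_mul (K^2)
    rw [show K^2*((0:ℝ)+2*0+0) = 0 by ring] at h
    exact h.eventually_lt_const (by linarith)
  have E3 : ∀ᶠ t : ℝ in atTop,
      2*c*l*((l+|y|)*(Real.log t/t^2) + (Real.sqrt 2+1)*(Real.log t/t)
        + c*(Real.log t^2/t)) < δ/3 := by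
    have h := (((hd2.const_mul (l+|y|)).add (ha.const_mul (Real.sqrt 2+1))).add
        (hb.const_mul c)).const_mul (2*c*l)
    rw [show 2*c*l*((l+|y|)*(0:ℝ)+(Real.sqrt 2+1)*0+c*0) = 0 by ring] at h
    exact h.eventually_lt_const (by linarith)
  have E4 : ∀ᶠ t : ℝ in atTop, 2*(L+l)*(1/t) < δ := by
    have h := hc1.const_mul (2*(L+l))
    rw [mul_zero] at h
    exact h.eventually_lt_const hδ0
  obtain ⟨t₀', ht₀'⟩ := eventually_atTop.mp (E0.and (E1.and (E2.and (E3.and E4))))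
  refine ⟨max t₀' (2*L+1), lt_of_lt_of_le (by linarith) (le_max_right _ _), fun t ht => ?_⟩
  obtain ⟨h0, h1, h2, h3, h4⟩ := ht₀' t (le_trans (le_max_left _ _) ht)
  clear E0 E1 E2 E3 E4 ha hb hc1 hd2 ht₀' ht hlftop hlf
  -- basic facts about t
  have ht6 : (6:ℝ) ≤ t := by linarith only [h0, hL, hl1]
  have ht0 : (0:ℝ) < t := by linarith only [ht6]
  have ht1le : (1:ℝ) ≤ t := by linarith only [ht6]
  have hlt0 : 0 ≤ Real.log t := Real.log_nonneg ht1le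
  have hT2 : t/2 + 1 ≤ t - L - l := by linarith only [h0]
  have hTpos : (0:ℝ) < t - L - l := by linarith only [hT2, ht6]
  have hTt : t - L - l ≤ t := by linarith only [hL, hl1]
  intro z hz w hw
  obtain ⟨hz1, hz2⟩ := hz
  have hz0 : 0 ≤ z := le_trans (Real.rpow_nonneg (by linarith only [hL]) _) hz1
  simp only [yW, UpsGauss, ← hl] at hw ⊢
  obtain ⟨hw1, hw2⟩ := hw
  -- positivity of the denominator
  have hU : (0:ℝ) < (2 * Real.pi) ^ (-(1:ℝ)/2) * t ^ (1 - alphaD d) *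
      Real.exp (-(t - L - l)) * Real.exp (-(Real.sqrt 2) * (z + y)) *
      Real.exp (Real.sqrt 2 * w) * Real.exp (-w ^ 2 / (2 * (t - L - l))) *
      Real.exp ((y + z + cD d * Real.log t) * w / (t - L - l)) := by
    have p1 : (0:ℝ) < (2 * Real.pi) ^ (-(1:ℝ)/2) := Real.rpow_pos_of_pos (by positivity) _
    have p2 : (0:ℝ) < t ^ (1 - alphaD d) := Real.rpow_pos_of_pos ht0 _
    exact mul_pos (mul_pos (mul_pos (mul_pos (mul_pos (mul_pos p1 p2)
      (Real.exp_pos _)) (Real.exp_pos _)) (Real.exp_pos _)) (Real.exp_pos _)) (Real.exp_pos _)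
  rw [gauss_ratio d y l t L z w ht0 hTpos, mul_div_cancel_left₀ _ hU.ne']
  -- abbreviations
  set lt : ℝ := Real.log t with hltdef
  set T : ℝ := t - L - l with hT
  set B : ℝ := cD d * lt + y + z - cD d * l * lt / t with hBdef
  clear_value B T lt K c l δ
  -- |w| bound
  have hsqd : (1:ℝ) ≤ Real.sqrt d := by
    rw [Real.one_le_sqrt]
    have h2d : (2:ℝ) ≤ d := by exact_mod_cast hd
    linarith only [h2d]
  have hmt : |mT d t / t| ≤ Real.sqrt 2 + c * lt := by
    rw [mT, ← hltdef, abs_div, abs_of_nonneg ht0.le, div_le_iff₀ ht0]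
    have tri : |Real.sqrt 2 * t + cD d * lt| ≤ Real.sqrt 2 * t + c * lt := by
      refine (abs_add_le _ _).trans ?_
      rw [abs_mul, abs_of_nonneg hs0.le, abs_of_nonneg ht0.le, abs_mul,
        abs_of_nonneg hlt0, ← hcdef]
    refine tri.trans ?_
    have hmm : c * lt * 1 ≤ c * lt * t :=
      mul_le_mul_of_nonneg_left ht1le (mul_nonneg hc0 hlt0)
    have hexp : (Real.sqrt 2 + c*lt)*t = Real.sqrt 2*t + c*lt*t := by ring
    linarith only [hmm, hexp]
  have hwabs : |w| ≤ l + |y| + (Real.sqrt 2 + c*lt)*t + t := by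
    rw [abs_le]
    constructor
    · have hlog : Real.log l ≤ l := (Real.log_le_sub_one_of_pos hl0).trans (by linarith only [])
      have hnn : 0 ≤ (Real.sqrt 2 + c*lt)*t := mul_nonneg (add_nonneg hs0.le (mul_nonneg hc0 hlt0)) ht0.le
      have hy0 := abs_nonneg y
      linarith only [hw1, hlog, hnn, hy0, ht0]
    · have hb1 : mT d t / t * (t - l) ≤ (Real.sqrt 2 + c*lt)*t := by
        calc mT d t / t * (t - l) ≤ |mT d t / t * (t - l)| := le_abs_self _
        _ = |mT d t / t| * (t - l) := by
            rw [abs_mul, abs_of_nonneg (by linarith only [h0, hL, hl0] : (0:ℝ) ≤ t - l)]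
        _ ≤ (Real.sqrt 2 + c*lt) * t :=
            mul_le_mul hmt (by linarith only [hl0]) (by linarith only [h0, hL, hl0]) (add_nonneg hs0.le (mul_nonneg hc0 hlt0))
      have hb2 : 0 ≤ t / Real.sqrt d := div_nonneg ht0.le (Real.sqrt_nonneg _)
      have hy1 := le_abs_self y
      linarith only [hw2, hb1, hb2, hy1, hl0, ht0]
  -- bounds on the three error terms
  have he1 : |Real.sqrt 2 * cD d * l * lt / t| ≤ δ/3 := by
    have heq : |Real.sqrt 2 * cD d * l * lt / t| = Real.sqrt 2 * c * l * (lt/t) := by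
      rw [abs_div, abs_mul, abs_mul, abs_mul, abs_of_nonneg hs0.le,
        abs_of_nonneg hl0.le, abs_of_nonneg hlt0, abs_of_nonneg ht0.le, ← hcdef]
      ring
    rw [heq]
    linarith only [h1]
  have hBb : |B| ≤ K * (1 + lt) := by
    have hq : |cD d * l * lt / t| ≤ c * l * lt := by
      rw [abs_div, abs_mul, abs_mul, abs_of_nonneg hl0.le, abs_of_nonneg hlt0,
        abs_of_nonneg ht0.le, ← hcdef]
      exact div_le_self (mul_nonneg (mul_nonneg hc0 hl0.le) hlt0) ht1le
    have hp : |cD d * lt| ≤ c * lt := by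
      rw [abs_mul, abs_of_nonneg hlt0, ← hcdef]
    have t0 : |B| ≤ |cD d*lt + y + z| + |cD d*l*lt/t| := by
      rw [hBdef]; exact abs_sub _ _
    have t1 : |cD d*lt + y + z| ≤ |cD d*lt| + |y| + |z| :=
      (abs_add_le _ _).trans (add_le_add_left (abs_add_le _ _) _)
    rw [abs_of_nonneg hz0] at t1
    have hKe : K * (1 + lt) = c + c*l + |y| + L ^ ((2:ℝ)/3)
        + c*lt + c*l*lt + lt*|y| + lt*L ^ ((2:ℝ)/3) := by rw [hK]; ring
    linarith only [t0, t1, hp, hq, hKe, hz2, mul_nonneg (abs_nonneg y) hlt0,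
      mul_nonneg hL23 hlt0, hc0, mul_nonneg hc0 hl0.le]
  have he2 : B^2/(2*T) ≤ δ/3 := by
    have h1' : B^2 ≤ (K*(1+lt))^2 := by
      rw [← sq_abs B]; exact pow_le_pow_left₀ (abs_nonneg _) hBb 2
    have h2' : B^2/(2*T) ≤ (K*(1+lt))^2 / t :=
      div_le_div₀ (sq_nonneg _) h1' ht0 (by linarith only [hT2])
    have h3' : (K*(1+lt))^2 / t = K^2*(1/t + 2*(lt/t) + lt^2/t) := by ring
    linarith only [h2', h3', h2]
  have he3 : |cD d * l * lt * w / (t*T)| ≤ δ/3 := by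
    have habs : |cD d * l * lt * w / (t*T)| = c*l*lt*|w|/(t*T) := by
      rw [abs_div, abs_mul, abs_mul, abs_mul, abs_of_nonneg hl0.le,
        abs_of_nonneg hlt0, abs_of_nonneg (mul_nonneg ht0.le hTpos.le), ← hcdef]
    have hTT : t*(t/2) ≤ t*T :=
      mul_le_mul_of_nonneg_left (by linarith only [hT2]) ht0.le
    have hcll : 0 ≤ c*l*lt := mul_nonneg (mul_nonneg hc0 hl0.le) hlt0
    have hnum : c*l*lt*|w| ≤ c*l*lt*(l + |y| + (Real.sqrt 2 + c*lt)*t + t) :=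
      mul_le_mul_of_nonneg_left hwabs hcll
    calc |cD d*l*lt*w/(t*T)| = c*l*lt*|w|/(t*T) := habs
    _ ≤ c*l*lt*(l + |y| + (Real.sqrt 2 + c*lt)*t + t) / (t*(t/2)) :=
        div_le_div₀ (mul_nonneg hcll (add_nonneg (add_nonneg (add_nonneg hl0.le
            (abs_nonneg y)) (mul_nonneg (add_nonneg hs0.le (mul_nonneg hc0 hlt0)) ht0.le))
            ht0.le)) hnum (mul_pos ht0 (by linarith only [ht0])) hTT
    _ = 2*c*l*((l+|y|)*(lt/t^2) + (Real.sqrt 2+1)*(lt/t) + c*(lt^2/t)) := by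
        field_simp
        ring
    _ ≤ δ/3 := le_of_lt h3
  have hEb : |Real.sqrt 2 * cD d * l * lt / t - B^2/(2*T) - cD d*l*lt*w/(t*T)| ≤ δ := by
    have t0 : |Real.sqrt 2 * cD d * l * lt / t - B^2/(2*T) - cD d*l*lt*w/(t*T)|
        ≤ |Real.sqrt 2 * cD d * l * lt / t - B^2/(2*T)| + |cD d*l*lt*w/(t*T)| := abs_sub _ _
    have t1 : |Real.sqrt 2 * cD d * l * lt / t - B^2/(2*T)|
        ≤ |Real.sqrt 2 * cD d * l * lt / t| + |B^2/(2*T)| := abs_sub _ _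
    have t2 : |B^2/(2*T)| = B^2/(2*T) :=
      abs_of_nonneg (div_nonneg (sq_nonneg B) (by linarith only [hTpos]))
    rw [t2] at t1
    linarith only [t0, t1, he1, he2, he3]
  -- bounds on the power factor
  have htT : t/T ≤ 1 + δ := by
    rw [div_le_iff₀ hTpos]
    rw [mul_one_div] at h4
    have h4' : 2*(L+l) < δ * t := (div_lt_iff₀ ht0).mp h4
    have hmul : δ*(t/2+1) ≤ δ*T := mul_le_mul_of_nonneg_left hT2 hδ0.le
    have hTe : (1+δ)*T = T + δ*T := by ring
    have hTe2 : δ*(t/2+1) = δ*t/2 + δ := by ring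
    have hTv : T = t - L - l := hT
    linarith only [h4', hmul, hTe, hTe2, hTv, hδ0]
  have hP1 : 1 ≤ (t/T) ^ ((1:ℝ)/2) :=
    Real.one_le_rpow ((one_le_div hTpos).mpr hTt) (by norm_num)
  have hP2 : (t/T) ^ ((1:ℝ)/2) ≤ 1 + δ := by
    calc (t/T) ^ ((1:ℝ)/2) ≤ (1+δ)^((1:ℝ)/2) :=
        Real.rpow_le_rpow (div_nonneg ht0.le hTpos.le) htT (by norm_num)
    _ ≤ (1+δ)^(1:ℝ) := Real.rpow_le_rpow_of_exponent_le (by linarith only [hδ0]) (by norm_num)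
    _ = 1 + δ := Real.rpow_one _
  -- conclusion
  set P : ℝ := (t/T) ^ ((1:ℝ)/2) with hPdef
  set Eex : ℝ := Real.sqrt 2 * cD d * l * lt / t - B^2/(2*T) - cD d*l*lt*w/(t*T) with hEdef
  have hexp : |Real.exp Eex - 1| ≤ 2*|Eex| := Real.abs_exp_sub_one_le (hEb.trans hδ1)
  have hsplit : P * Real.exp Eex - 1 = P*(Real.exp Eex - 1) + (P - 1) := by ring
  calc |P * Real.exp Eex - 1| ≤ |P*(Real.exp Eex - 1)| + |P-1| := by
        rw [hsplit]; exact abs_add_le _ _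
  _ ≤ (1+δ)*(2*δ) + δ := by
      have e1 : |P*(Real.exp Eex - 1)| = P*|Real.exp Eex - 1| := by
        rw [abs_mul, abs_of_nonneg (by linarith only [hP1] : (0:ℝ) ≤ P)]
      have e2 : |P - 1| = P - 1 := abs_of_nonneg (by linarith only [hP1])
      rw [e1, e2]
      have hmm : P * |Real.exp Eex - 1| ≤ (1+δ)*(2*δ) :=
        mul_le_mul hP2 (hexp.trans (by linarith only [hEb])) (abs_nonneg _)
          (by linarith only [hδ0])
      linarith only [hmm, hP2]
  _ ≤ ε := by
      have hdd : δ*δ ≤ δ*1 := mul_le_mul_of_nonneg_left hδ1 hδ0.le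
      have hh : (1+δ)*(2*δ) = 2*δ + 2*(δ*δ) := by ring
      linarith only [hdd, hh, hδε, hδ0]

end
end

section
/- Simplified uniform asymptotics of the Gaussian transition density for moderate window depths: For every ε > 0 there exists L₀ ≥ 1 such that for every L ≥ L₀ there exists t₀ > 2L such that for all t ≥ t₀, all z ∈ [L^{1/6}, L^{2/3}] and all w ∈ [−log ℓ, t^{1/3}]: | g_{t̃−ℓ}( 𝐲(w) − 𝐱(z) ) / ( (2π)^{−1/2} · e^{−(t̃−ℓ)} · (t−ℓ)^{1−α_d} · e^{−√2·(z+y)} · e^{√2·w} ) − 1 | ≤ ε. -/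
open MeasureTheory ProbabilityTheory Filter Set

noncomputable section

private lemma sq_add_three_le (a b c : ℝ) : (a+b+c)^2 ≤ 3*(a^2+b^2+c^2) := by
  nlinarith [sq_nonneg (a-b), sq_nonneg (a-c), sq_nonneg (b-c)]

set_option maxHeartbeats 1000000 in
/-- **Simplified uniform asymptotics of the Gaussian transition density for moderate
window depths.** For every `ε > 0`, for all sufficiently large `L` and then all
sufficiently large `t`, uniformly over `z ∈ [L^{1/6}, L^{2/3}]` and
`w ∈ [-log ℓ, t^{1/3}]`, `g_{t̃-ℓ}(𝐲(w) - 𝐱(z))` equals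
`(2π)^{-1/2}·e^{-(t̃-ℓ)}·(t-ℓ)^{1-α_d}·e^{-√2(z+y)}·e^{√2 w}` up to a multiplicative
factor within `ε` of `1`. -/
theorem gaussian_density_simplified
    (d : ℕ) (hd : 2 ≤ d) (y : ℝ) (lf : ℝ → ℝ)
    (hlf : ∀ L ≥ (1 : ℝ), 1 ≤ lf L ∧ lf L ≤ L ^ ((1 : ℝ) / 6))
    (hlftop : Tendsto lf atTop atTop) (ε : ℝ) (hε : 0 < ε) :
    ∃ L₀ ≥ (1 : ℝ), ∀ L ≥ L₀, ∃ t₀ > 2 * L, ∀ t ≥ t₀,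
      ∀ z ∈ Icc (L ^ ((1 : ℝ) / 6)) (L ^ ((2 : ℝ) / 3)),
      ∀ w ∈ Icc (-Real.log (lf L)) (t ^ ((1 : ℝ) / 3)),
        |gaussDens (t - L - lf L) (yW d y lf t L w - xZ L z)
            / ((2 * Real.pi) ^ (-(1 : ℝ) / 2) * Real.exp (-(t - L - lf L)) *
              (t - lf L) ^ (1 - alphaD d) * Real.exp (-(Real.sqrt 2) * (z + y)) *
              Real.exp (Real.sqrt 2 * w)) - 1| ≤ ε := by
  refine ⟨1, le_rfl, fun L hL => ?_⟩
  obtain ⟨hl1, hl2⟩ := hlf L hL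
  have hL0 : (0:ℝ) < L := lt_of_lt_of_le one_pos hL
  set l : ℝ := lf L with hldef
  have hl0 : (0:ℝ) < l := lt_of_lt_of_le one_pos hl1
  have hlL : l ≤ L := by
    calc l ≤ L ^ ((1:ℝ)/6) := hl2
    _ ≤ L ^ (1:ℝ) := Real.rpow_le_rpow_of_exponent_le hL (by norm_num)
    _ = L := Real.rpow_one L
  have hlogl : 0 ≤ Real.log l := Real.log_nonneg hl1
  set K : ℝ := L ^ ((2:ℝ)/3) + |y| + Real.log l with hKdef
  have hK0 : 0 ≤ K := by
    rw [hKdef]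
    exact add_nonneg (add_nonneg (Real.rpow_nonneg hL0.le _) (abs_nonneg y)) hlogl
  set s2 : ℝ := Real.sqrt 2 with hs2def
  have hs2pos : 0 < s2 := Real.sqrt_pos.mpr (by norm_num)
  have hs2sq : s2 ^ 2 = 2 := Real.sq_sqrt (by norm_num)
  set δ : ℝ := min 1 (ε/2) with hδdef
  have hδ : 0 < δ := lt_min one_pos (half_pos hε)
  -- the uniform error bound as a function of t
  have h1 : Tendsto (fun t:ℝ => (2*l)/t) atTop (nhds 0) :=
    tendsto_const_nhds.div_atTop tendsto_id
  have h2 : Tendsto (fun t:ℝ => (2*(L+l))/t) atTop (nhds 0) :=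
    tendsto_const_nhds.div_atTop tendsto_id
  have h3 : Tendsto (fun t:ℝ => Real.log t / t) atTop (nhds 0) := by
    simpa using Real.tendsto_pow_log_div_mul_add_atTop 1 0 1 one_ne_zero
  have h4 : Tendsto (fun t:ℝ => (Real.log t)^2 / t) atTop (nhds 0) := by
    simpa using Real.tendsto_pow_log_div_mul_add_atTop 1 0 2 one_ne_zero
  have h5 : Tendsto (fun t:ℝ => (3*K^2)/t) atTop (nhds 0) :=
    tendsto_const_nhds.div_atTop tendsto_id
  have h6 : Tendsto (fun t:ℝ => t ^ (-((1:ℝ)/3))) atTop (nhds 0) :=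
    tendsto_rpow_neg_atTop (by norm_num)
  have hH : Tendsto (fun t:ℝ =>
      |alphaD d - 1| * (2*l/t) + (1/2)*(2*(L+l)/t)
        + |((d:ℝ)-4)/2| * l * (Real.log t / t)
        + ((3*K^2)/t + (3*(cD d)^2*((Real.log t)^2/t) + 3*t ^ (-((1:ℝ)/3)))))
      atTop (nhds 0) := by
    have := (((h1.const_mul |alphaD d - 1|).add (h2.const_mul ((1:ℝ)/2))).add
        (h3.const_mul (|((d:ℝ)-4)/2| * l))).add
        (h5.add ((h4.const_mul (3*(cD d)^2)).add (h6.const_mul (3:ℝ))))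
    simpa [mul_div_assoc] using this
  have hev : ∀ᶠ t:ℝ in atTop, 4*L ≤ t ∧
      |alphaD d - 1| * (2*l/t) + (1/2)*(2*(L+l)/t)
        + |((d:ℝ)-4)/2| * l * (Real.log t / t)
        + ((3*K^2)/t + (3*(cD d)^2*((Real.log t)^2/t) + 3*t ^ (-((1:ℝ)/3)))) ≤ δ :=
    (eventually_ge_atTop (4*L)).and (hH.eventually (eventually_le_nhds hδ))
  obtain ⟨t₀, ht₀⟩ := eventually_atTop.mp hev
  refine ⟨max t₀ (4*L), lt_of_lt_of_le (by linarith) (le_max_right _ _), fun t ht => ?_⟩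
  obtain ⟨h4L, hHt⟩ := ht₀ t (le_trans (le_max_left _ _) ht)
  intro z hz w hw
  obtain ⟨hz1, hz2⟩ := hz
  obtain ⟨hw1, hw2⟩ := hw
  have ht0 : (0:ℝ) < t := by linarith
  have ht1 : (1:ℝ) ≤ t := by linarith
  have hlogt : 0 ≤ Real.log t := Real.log_nonneg ht1
  have hT0 : (0:ℝ) < t - L - l := by linarith
  have hT2 : t/2 ≤ t - L - l := by linarith
  have htl0 : (0:ℝ) < t - l := by linarith
  have htl2 : t/2 ≤ t - l := by linarith
  have hz0 : 0 ≤ z := le_trans (Real.rpow_nonneg hL0.le _) hz1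
  have ht13 : (0:ℝ) ≤ t ^ ((1:ℝ)/3) := Real.rpow_nonneg ht0.le _
  set T : ℝ := t - L - l with hTdef
  set r : ℝ := cD d * Real.log t * (1 - l/t) + z + y - w with hrdef
  have hTne : T ≠ 0 := ne_of_gt hT0
  have hu : yW d y lf t L w - xZ L z = s2*T + r := by
    rw [yW, mT, xZ, hrdef, hTdef, ← hldef, ← hs2def]
    field_simp
    ring
  have hs2c : s2 * cD d = ((d:ℝ)-4)/2 := by
    rw [cD, ← hs2def]
    field_simp
  have ha : alphaD d = ((d:ℝ)-1)/2 := rfl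
  have hu2 : (s2*T + r)^2 = 2*T^2 + 2*s2*T*r + r^2 := by
    linear_combination T^2 * hs2sq
  have hnum : gaussDens T (s2*T+r) = Real.exp (Real.log (2*Real.pi) * (-(1:ℝ)/2)
      + Real.log T * (-(1:ℝ)/2) + -(T + s2*r + r^2/(2*T))) := by
    rw [gaussDens, Real.rpow_def_of_pos (by positivity),
      Real.log_mul (by positivity) hTne, hu2, ← Real.exp_add]
    congr 1
    field_simp
    ring
  have hden : (2 * Real.pi) ^ (-(1 : ℝ) / 2) * Real.exp (-T) *
        (t - l) ^ (1 - alphaD d) * Real.exp (-s2 * (z + y)) * Real.exp (s2 * w)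
      = Real.exp (Real.log (2*Real.pi) * (-(1:ℝ)/2) + -T
        + Real.log (t-l) * (1 - alphaD d) + -s2*(z+y) + s2*w) := by
    rw [Real.rpow_def_of_pos (by positivity), Real.rpow_def_of_pos htl0,
      ← Real.exp_add, ← Real.exp_add, ← Real.exp_add, ← Real.exp_add]
  have key : gaussDens T (s2*T+r) /
      ((2 * Real.pi) ^ (-(1 : ℝ) / 2) * Real.exp (-T) *
        (t - l) ^ (1 - alphaD d) * Real.exp (-s2 * (z + y)) * Real.exp (s2 * w))
      = Real.exp ((alphaD d - 1)*(Real.log (t-l) - Real.log t)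
        + (1/2)*(Real.log t - Real.log T)
        + (((d:ℝ)-4)/2)*(l/t*Real.log t) - r^2/(2*T)) := by
    rw [hnum, hden, ← Real.exp_sub]
    congr 1
    linear_combination (-s2) * hrdef + (-(Real.log t) * (1 - l/t)) * hs2c
      + (Real.log t) * ha
  rw [hu, key]
  -- now bound the exponent
  have hb1 : |(alphaD d - 1) * (Real.log (t - l) - Real.log t)|
      ≤ |alphaD d - 1| * (2*l/t) := by
    rw [abs_mul]
    refine mul_le_mul_of_nonneg_left ?_ (abs_nonneg _)
    rw [abs_sub_comm, abs_of_nonneg (sub_nonneg.mpr (Real.log_le_log htl0 (by linarith)))]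
    have e2 := Real.log_le_sub_one_of_pos (show (0:ℝ) < t/(t-l) by positivity)
    rw [Real.log_div ht0.ne' htl0.ne'] at e2
    refine e2.trans ?_
    rw [div_sub_one htl0.ne', div_le_div_iff₀ htl0 ht0]
    calc (t - (t - l)) * t = l * t := by ring
      _ ≤ l * (2*(t-l)) := mul_le_mul_of_nonneg_left (by linarith) hl0.le
      _ = 2*l*(t-l) := by ring
  have hb2 : |(1/2) * (Real.log t - Real.log T)| ≤ (1/2)*(2*(L+l)/t) := by
    rw [abs_mul, abs_of_nonneg (by norm_num : (0:ℝ) ≤ (1:ℝ)/2)]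
    refine mul_le_mul_of_nonneg_left ?_ (by norm_num)
    rw [abs_of_nonneg (sub_nonneg.mpr (Real.log_le_log hT0 (by rw [hTdef]; linarith)))]
    have e2 := Real.log_le_sub_one_of_pos (show (0:ℝ) < t/T by positivity)
    rw [Real.log_div ht0.ne' hTne] at e2
    refine e2.trans ?_
    rw [div_sub_one hTne, div_le_div_iff₀ hT0 ht0, hTdef]
    calc (t - (t - L - l)) * t = (L+l) * t := by ring
      _ ≤ (L+l) * (2*(t-L-l)) := mul_le_mul_of_nonneg_left (by linarith) (by linarith)
      _ = 2*(L+l)*(t-L-l) := by ring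
  have hb3 : |(((d:ℝ)-4)/2)*(l/t*Real.log t)| ≤ |((d:ℝ)-4)/2| * l * (Real.log t / t) := by
    rw [abs_mul, abs_of_nonneg (mul_nonneg (by positivity) hlogt)]
    exact le_of_eq (by ring)
  have hlt1 : l/t ≤ 1 := by rw [div_le_one ht0]; linarith
  have hlt0 : (0:ℝ) ≤ l/t := by positivity
  have hrabs : |r| ≤ K + t^((1:ℝ)/3) + |cD d| * Real.log t := by
    have w1 : |r| ≤ |cD d * Real.log t * (1 - l/t) + z + y| + |w| := by
      rw [hrdef]; exact abs_sub _ _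
    have w2 : |cD d * Real.log t * (1 - l/t) + z + y|
        ≤ |cD d * Real.log t * (1 - l/t)| + |z| + |y| :=
      le_trans (abs_add_le _ _) (by gcongr; exact abs_add_le _ _)
    have w3 : |cD d * Real.log t * (1 - l/t)| ≤ |cD d| * Real.log t := by
      rw [abs_mul, abs_mul, abs_of_nonneg hlogt,
        abs_of_nonneg (by linarith : (0:ℝ) ≤ 1 - l/t)]
      exact mul_le_of_le_one_right (mul_nonneg (abs_nonneg _) hlogt) (by linarith)
    have w4 : |z| ≤ L ^ ((2:ℝ)/3) := by rw [abs_of_nonneg hz0]; exact hz2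
    have w5 : |w| ≤ Real.log l + t^((1:ℝ)/3) := by
      rw [abs_le]
      constructor
      · linarith
      · linarith
    rw [hKdef]
    calc |r| ≤ (|cD d * Real.log t * (1 - l/t)| + |z| + |y|) + |w| := by
          exact le_trans w1 (by linarith)
      _ ≤ (|cD d| * Real.log t + L ^ ((2:ℝ)/3) + |y|) + (Real.log l + t^((1:ℝ)/3)) := by
          gcongr
      _ = L ^ ((2:ℝ)/3) + |y| + Real.log l + t ^ ((1:ℝ)/3) + |cD d| * Real.log t := by
          ring
  have h13 : t^((1:ℝ)/3) * t^((1:ℝ)/3) = t^((2:ℝ)/3) := by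
    rw [← Real.rpow_add ht0]; norm_num
  have hr2 : r^2 ≤ 3*K^2 + 3*t^((2:ℝ)/3) + 3*(cD d)^2*(Real.log t)^2 := by
    have hA2 : (t^((1:ℝ)/3))^2 = t^((2:ℝ)/3) := by rw [pow_two]; exact h13
    have hB2 : (|cD d| *Real.log t)^2 = (cD d)^2*(Real.log t)^2 := by
      rw [mul_pow, sq_abs]
    have hq1 : r^2 ≤ (K + t^((1:ℝ)/3) + |cD d| * Real.log t)^2 := by
      have h := mul_self_le_mul_self (abs_nonneg r) hrabs
      calc r^2 = |r| * |r| := by rw [abs_mul_abs_self, pow_two]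
        _ ≤ (K + t^((1:ℝ)/3) + |cD d| * Real.log t)
              * (K + t^((1:ℝ)/3) + |cD d| * Real.log t) := h
        _ = (K + t^((1:ℝ)/3) + |cD d| * Real.log t)^2 := by rw [pow_two]
    have hq2 : (K + t^((1:ℝ)/3) + |cD d| * Real.log t)^2
        ≤ 3*(K^2 + (t^((1:ℝ)/3))^2 + (|cD d| * Real.log t)^2) :=
      sq_add_three_le _ _ _
    calc r^2 ≤ 3*(K^2 + (t^((1:ℝ)/3))^2 + (|cD d| *Real.log t)^2) := le_trans hq1 hq2
      _ = 3*K^2 + 3*t^((2:ℝ)/3) + 3*(cD d)^2*(Real.log t)^2 := by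
          rw [hA2, hB2]; ring
  have hpow : t^((2:ℝ)/3)/t = t^(-((1:ℝ)/3)) := by
    rw [show -((1:ℝ)/3) = (2:ℝ)/3 - 1 by norm_num, Real.rpow_sub ht0, Real.rpow_one]
  have hb4 : |r^2/(2*T)| ≤ (3*K^2)/t + (3*(cD d)^2*((Real.log t)^2/t) + 3*t ^ (-((1:ℝ)/3))) := by
    rw [abs_of_nonneg (by positivity)]
    have step1 : r^2/(2*T) ≤ r^2/t := by
      rw [div_le_div_iff₀ (by positivity) ht0]
      calc r^2 * t ≤ r^2 * (2*T) :=
            mul_le_mul_of_nonneg_left (by linarith) (sq_nonneg r)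
        _ = r^2 * (2*T) := rfl
    have step2 : r^2/t ≤ (3*K^2 + 3*t^((2:ℝ)/3) + 3*(cD d)^2*(Real.log t)^2)/t := by
      gcongr
    have step3 : (3*K^2 + 3*t^((2:ℝ)/3) + 3*(cD d)^2*(Real.log t)^2)/t
        = (3*K^2)/t + (3*(cD d)^2*((Real.log t)^2/t) + 3*(t^((2:ℝ)/3)/t)) := by ring
    calc r^2/(2*T) ≤ (3*K^2 + 3*t^((2:ℝ)/3) + 3*(cD d)^2*(Real.log t)^2)/t :=
          le_trans step1 step2
      _ = (3*K^2)/t + (3*(cD d)^2*((Real.log t)^2/t) + 3*(t^((2:ℝ)/3)/t)) := step3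
      _ = (3*K^2)/t + (3*(cD d)^2*((Real.log t)^2/t) + 3*t ^ (-((1:ℝ)/3))) := by
          rw [hpow]
  have hFb : |(alphaD d - 1)*(Real.log (t-l) - Real.log t)
      + (1/2)*(Real.log t - Real.log T)
      + (((d:ℝ)-4)/2)*(l/t*Real.log t) - r^2/(2*T)| ≤ δ := by
    have tri : |(alphaD d - 1)*(Real.log (t-l) - Real.log t)
        + (1/2)*(Real.log t - Real.log T)
        + (((d:ℝ)-4)/2)*(l/t*Real.log t) - r^2/(2*T)|
        ≤ |(alphaD d - 1)*(Real.log (t-l) - Real.log t)|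
          + |(1/2)*(Real.log t - Real.log T)|
          + |(((d:ℝ)-4)/2)*(l/t*Real.log t)| + |r^2/(2*T)| := by
      refine le_trans (abs_sub _ _) ?_
      gcongr
      exact le_trans (abs_add_le _ _) (by gcongr; exact abs_add_le _ _)
    have hHt' : |alphaD d - 1| * (2*l/t) + (1/2)*(2*(L+l)/t)
        + |((d:ℝ)-4)/2| * l * (Real.log t / t)
        + ((3*K^2)/t + (3*(cD d)^2*((Real.log t)^2/t) + 3*t ^ (-((1:ℝ)/3)))) ≤ δ := hHt
    linarith [hb1, hb2, hb3, hb4, tri]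
  calc |Real.exp ((alphaD d - 1)*(Real.log (t-l) - Real.log t)
        + (1/2)*(Real.log t - Real.log T)
        + (((d:ℝ)-4)/2)*(l/t*Real.log t) - r^2/(2*T)) - 1|
      ≤ 2 * |(alphaD d - 1)*(Real.log (t-l) - Real.log t)
        + (1/2)*(Real.log t - Real.log T)
        + (((d:ℝ)-4)/2)*(l/t*Real.log t) - r^2/(2*T)| :=
        Real.abs_exp_sub_one_le (hFb.trans (min_le_left _ _))
    _ ≤ 2 * δ := by linarith [hFb]
    _ ≤ ε := by
        have : δ ≤ ε/2 := min_le_right _ _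
        linarith

end
end

section
/- Uniform expansion of the leading exponential factor in the second-moment computation: For every ε > 0 there exists L₀ ≥ 1 such that for every L ≥ L₀ there exists t₀ > 2L such that for all t ≥ t₀ and all s ∈ [0, t̃−ℓ]: | exp( −(1/2)·(m_t/t)²·(t̃−ℓ+s) ) / ( exp( −(t̃−ℓ+s) ) · t^{3/2−α_d} · exp( −α_d·s·(log t)/t ) · exp( (3s/(2t))·log t ) ) − 1 | ≤ ε. -/
open MeasureTheory ProbabilityTheory Filter Set

noncomputable section

set_option maxHeartbeats 1000000 in
/-- **Uniform expansion of the leading exponential factor in the second-moment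
computation.** For every `ε > 0`, for all sufficiently large `L` and then all
sufficiently large `t`, uniformly over `s ∈ [0, t̃-ℓ]`,
`exp(-(1/2)(m_t/t)²(t̃-ℓ+s))` equals
`exp(-(t̃-ℓ+s))·t^{3/2-α_d}·exp(-α_d·s·(log t)/t)·exp((3s/(2t))·log t)` up to a
multiplicative factor within `ε` of `1`. -/
theorem leading_exponential_expansion
    (d : ℕ) (hd : 2 ≤ d) (y : ℝ) (lf : ℝ → ℝ)
    (hlf : ∀ L ≥ (1 : ℝ), 1 ≤ lf L ∧ lf L ≤ L ^ ((1 : ℝ) / 6))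
    (hlftop : Tendsto lf atTop atTop) (ε : ℝ) (hε : 0 < ε) :
    ∃ L₀ ≥ (1 : ℝ), ∀ L ≥ L₀, ∃ t₀ > 2 * L, ∀ t ≥ t₀,
      ∀ s ∈ Icc (0 : ℝ) (t - L - lf L),
        |Real.exp (-(1 / 2) * (mT d t / t) ^ 2 * (t - L - lf L + s))
            / (Real.exp (-(t - L - lf L + s)) * t ^ ((3 : ℝ) / 2 - alphaD d) *
              Real.exp (-alphaD d * s * Real.log t / t) *
              Real.exp (3 * s / (2 * t) * Real.log t)) - 1| ≤ ε := by
  have h2 : Real.sqrt 2 ^ 2 = 2 := Real.sq_sqrt (by norm_num)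
  have hs2 : Real.sqrt 2 ≠ 0 := by positivity
  refine ⟨1, le_rfl, fun L hL => ?_⟩
  obtain ⟨hℓ1, -⟩ := hlf L hL
  set δ := Real.log (1 + ε) with hδdef
  have hδ : 0 < δ := Real.log_pos (by linarith)
  -- the error bound tends to 0
  have a1 : Tendsto (fun t : ℝ => Real.log t / t) atTop (nhds 0) := by
    have := Real.tendsto_pow_log_div_mul_add_atTop 1 0 1 one_ne_zero
    simpa using this
  have a2 : Tendsto (fun t : ℝ => (Real.log t) ^ 2 / t) atTop (nhds 0) := by
    have := Real.tendsto_pow_log_div_mul_add_atTop 1 0 2 one_ne_zero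
    simpa using this
  have hbt : Tendsto
      (fun t : ℝ => |((d:ℝ) - 4) / 2| * (L + lf L) * (Real.log t / t)
        + ((d:ℝ) - 4) ^ 2 / 8 * ((Real.log t) ^ 2 / t)) atTop (nhds 0) := by
    have := (a1.const_mul (|((d:ℝ) - 4) / 2| * (L + lf L))).add
      (a2.const_mul (((d:ℝ) - 4) ^ 2 / 8))
    simpa using this
  have hev : ∀ᶠ t in atTop,
      |((d:ℝ) - 4) / 2| * (L + lf L) * (Real.log t / t)
        + ((d:ℝ) - 4) ^ 2 / 8 * ((Real.log t) ^ 2 / t) < δ :=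
    hbt.eventually (gt_mem_nhds hδ)
  obtain ⟨T, hT⟩ := eventually_atTop.1 hev
  refine ⟨max T (2 * L + 1), lt_of_lt_of_le (by linarith) (le_max_right _ _),
    fun t ht s hs => ?_⟩
  have htT : T ≤ t := le_trans (le_max_left _ _) ht
  have htL : 2 * L + 1 ≤ t := le_trans (le_max_right _ _) ht
  have ht1 : (1 : ℝ) < t := by linarith
  have ht0 : (0 : ℝ) < t := by linarith
  have hlt : 0 ≤ Real.log t := Real.log_nonneg (by linarith)
  obtain ⟨hs0, hs1⟩ := hs
  -- rewrite the denominator as a single exponential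
  have hden : Real.exp (-(t - L - lf L + s)) * t ^ ((3 : ℝ) / 2 - alphaD d) *
        Real.exp (-alphaD d * s * Real.log t / t) *
        Real.exp (3 * s / (2 * t) * Real.log t)
      = Real.exp (-(t - L - lf L + s) + Real.log t * ((3 : ℝ) / 2 - alphaD d)
          + (-alphaD d * s * Real.log t / t) + 3 * s / (2 * t) * Real.log t) := by
    rw [Real.rpow_def_of_pos ht0, ← Real.exp_add, ← Real.exp_add, ← Real.exp_add]
  rw [hden, ← Real.exp_sub]
  -- compute the exponent
  have hEeq : -(1 / 2) * (mT d t / t) ^ 2 * (t - L - lf L + s)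
        - (-(t - L - lf L + s) + Real.log t * ((3 : ℝ) / 2 - alphaD d)
          + (-alphaD d * s * Real.log t / t) + 3 * s / (2 * t) * Real.log t)
      = ((d:ℝ) - 4) / 2 * (L + lf L) * Real.log t / t
        - ((d:ℝ) - 4) ^ 2 / 16 * (Real.log t / t) ^ 2 * (t - L - lf L + s) := by
    have hc : 2 * Real.sqrt 2 * cD d = (d:ℝ) - 4 := by unfold cD; field_simp
    have hc2 : cD d ^ 2 = ((d:ℝ) - 4) ^ 2 / 8 := by
      unfold cD; rw [div_pow, mul_pow, h2]; norm_num
    have hm : (mT d t / t) ^ 2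
        = 2 + ((d:ℝ) - 4) * (Real.log t / t)
          + ((d:ℝ) - 4) ^ 2 / 8 * (Real.log t / t) ^ 2 := by
      have h1 : mT d t / t = Real.sqrt 2 + cD d * (Real.log t / t) := by
        unfold mT; field_simp
      rw [h1]
      linear_combination h2 + (Real.log t / t) * hc + (Real.log t / t) ^ 2 * hc2
    rw [hm]
    unfold alphaD
    field_simp
    ring
  rw [hEeq]
  set E := ((d:ℝ) - 4) / 2 * (L + lf L) * Real.log t / t
    - ((d:ℝ) - 4) ^ 2 / 16 * (Real.log t / t) ^ 2 * (t - L - lf L + s) with hEdef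
  -- bound |E| by the error bound, itself < δ
  have hEbound : |E| ≤ δ := by
    have hb := hT t htT
    have h1 : |((d:ℝ) - 4) / 2 * (L + lf L) * Real.log t / t|
        ≤ |((d:ℝ) - 4) / 2| * (L + lf L) * (Real.log t / t) := by
      rw [abs_div, abs_mul, abs_mul]
      rw [abs_of_nonneg (by linarith : (0:ℝ) ≤ L + lf L),
        abs_of_nonneg hlt, abs_of_pos ht0]
      rw [mul_div_assoc]
    have hu0 : 0 ≤ t - L - lf L + s := by
      have : 0 ≤ t - L - lf L := le_trans hs0 hs1
      linarith
    have hu2 : t - L - lf L + s ≤ 2 * t := by linarith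
    have h2' : |((d:ℝ) - 4) ^ 2 / 16 * (Real.log t / t) ^ 2 * (t - L - lf L + s)|
        ≤ ((d:ℝ) - 4) ^ 2 / 8 * ((Real.log t) ^ 2 / t) := by
      rw [abs_of_nonneg (by positivity)]
      have : ((d:ℝ) - 4) ^ 2 / 16 * (Real.log t / t) ^ 2 * (t - L - lf L + s)
          ≤ ((d:ℝ) - 4) ^ 2 / 16 * (Real.log t / t) ^ 2 * (2 * t) :=
        mul_le_mul_of_nonneg_left hu2 (by positivity)
      refine this.trans (le_of_eq ?_)
      field_simp
      ring
    calc |E| ≤ |((d:ℝ) - 4) / 2 * (L + lf L) * Real.log t / t|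
          + |((d:ℝ) - 4) ^ 2 / 16 * (Real.log t / t) ^ 2 * (t - L - lf L + s)| :=
        abs_sub _ _
      _ ≤ |((d:ℝ) - 4) / 2| * (L + lf L) * (Real.log t / t)
          + ((d:ℝ) - 4) ^ 2 / 8 * ((Real.log t) ^ 2 / t) := add_le_add h1 h2'
      _ ≤ δ := le_of_lt hb
  rw [abs_le] at hEbound ⊢
  have hup : Real.exp E ≤ 1 + ε := by
    calc Real.exp E ≤ Real.exp δ := Real.exp_le_exp.2 hEbound.2
      _ = 1 + ε := Real.exp_log (by linarith)
  have hlo : 1 - ε ≤ Real.exp E := by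
    have h3 : Real.exp (-δ) ≤ Real.exp E := Real.exp_le_exp.2 (by linarith [hEbound.1])
    have h4 : Real.exp (-δ) = (1 + ε)⁻¹ := by
      rw [Real.exp_neg, Real.exp_log (by linarith)]
    have h5 : (1 : ℝ) - ε ≤ (1 + ε)⁻¹ := by
      have hp : (0 : ℝ) < 1 + ε := by linarith
      rw [inv_eq_one_div, le_div_iff₀ hp]
      nlinarith [sq_nonneg ε]
    linarith [h4 ▸ h3]
  constructor <;> linarith

end
end
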